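/- arXiv:2605.24838 — 8 statements merged into one kernel-verified Lean document; each statement's English description precedes it below -/
import Mathlib

section
/- Let A and B be real symmetric positive semidefinite p×p matrices and let λ > 0. Then |tr((A + λI_p)⁻¹) − tr((B + λI_p)⁻¹)| ≤ rank(A − B)/λ. -/
/-!
With `R_A = (A + λI)⁻¹` and `R_B = (B + λI)⁻¹`, the resolvent identity
`R_B - R_A = R_B (A - B) R_A` bounds the rank of the Hermitian matrix `R_B - R_A` by
`rank (A - B)`. Both resolvents lie between `0` and `λ⁻¹ I` in the Loewner order, so every
eigenvalue of `R_B - R_A` lies in `[-λ⁻¹, λ⁻¹]`. The trace is the sum of the at most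
`rank (A - B)` nonzero eigenvalues.
-/

open Matrix

open scoped MatrixOrder ComplexOrder

section Field

variable {n K : Type*} [Fintype n] [DecidableEq n] [Field K]

theorem Matrix.rank_inv_sub_inv_le {A B : Matrix n n K} (h : IsUnit A ↔ IsUnit B) :
    (A⁻¹ - B⁻¹).rank ≤ (B - A).rank := by
  rw [inv_sub_inv h, Matrix.mul_assoc]
  exact (rank_mul_le_right _ _).trans (rank_mul_le_left _ _)

end Field

section RCLike

variable {n 𝕜 : Type*} [DecidableEq n] [RCLike 𝕜]

theorem Matrix.PosSemidef.posDef_add_smul_one {C : Matrix n n 𝕜} (hC : C.PosSemidef) {r : ℝ}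
    (hr : 0 < r) : (C + r • 1).PosDef :=
  PosDef.posSemidef_add hC (PosDef.one.smul hr)

variable [Fintype n]

namespace Matrix.IsHermitian

theorem abs_eigenvalues_le {M : Matrix n n 𝕜} (hM : M.IsHermitian) {c : ℝ}
    (hM' : M ∈ Set.Icc (-(c • 1)) (c • 1)) (i : n) : |hM.eigenvalues i| ≤ c := by
  rw [← neg_smul, ← Algebra.algebraMap_eq_smul_one, ← Algebra.algebraMap_eq_smul_one,
    Set.mem_Icc, algebraMap_le_iff_le_spectrum hM.isSelfAdjoint,
    le_algebraMap_iff_spectrum_le hM.isSelfAdjoint, hM.spectrum_real_eq_range_eigenvalues] at hM'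
  exact abs_le.2 ⟨hM'.1 _ ⟨i, rfl⟩, hM'.2 _ ⟨i, rfl⟩⟩

theorem norm_trace_le_rank_mul {M : Matrix n n 𝕜} (hM : M.IsHermitian) {c : ℝ}
    (h : ∀ i, |hM.eigenvalues i| ≤ c) : ‖M.trace‖ ≤ M.rank * c := by
  classical
  rw [hM.trace_eq_sum_eigenvalues, hM.rank_eq_card_non_zero_eigs, Fintype.card_subtype]
  calc ‖∑ i, (hM.eigenvalues i : 𝕜)‖
      = ‖∑ i with hM.eigenvalues i ≠ 0, (hM.eigenvalues i : 𝕜)‖ := by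
        rw [Finset.sum_filter_of_ne fun i _ hi => by exact_mod_cast hi]
    _ ≤ ∑ i with hM.eigenvalues i ≠ 0, c :=
        (norm_sum_le _ _).trans (Finset.sum_le_sum fun i _ => by simpa using h i)
    _ = _ := by rw [Finset.sum_const, nsmul_eq_mul]

end Matrix.IsHermitian

theorem Matrix.PosSemidef.inv_add_smul_one_mem_Icc {C : Matrix n n 𝕜} (hC : C.PosSemidef)
    {r : ℝ} (hr : 0 < r) : (C + r • 1)⁻¹ ∈ Set.Icc 0 (r⁻¹ • 1) := by
  refine ⟨(hC.posDef_add_smul_one hr).inv.posSemidef.nonneg, ?_⟩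
  have hspec : ∀ x ∈ spectrum ℝ C, 0 ≤ x := fun x hx => spectrum_nonneg_of_nonneg hC.nonneg hx
  have hne : ∀ x ∈ spectrum ℝ C, x + r ≠ 0 := fun x hx => by linarith [hspec x hx]
  -- `x ↦ (x + r)⁻¹` is at most `r⁻¹` on the nonnegative spectrum of `C`.
  have hcfc : (C + r • 1)⁻¹ = cfc (fun x => (x + r)⁻¹) C := by
    rw [cfc_inv (· + r) C hne, cfc_add_const r (fun x => x) C, cfc_id' ℝ C,
      nonsing_inv_eq_ringInverse, Algebra.algebraMap_eq_smul_one]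
  rw [hcfc, ← Algebra.algebraMap_eq_smul_one]
  refine cfc_le_algebraMap _ _ _ (fun x hx => ?_) (ContinuousOn.inv₀ (by fun_prop) hne)
  exact inv_anti₀ hr (by linarith [hspec x hx])

end RCLike

/-- For PSD matrices `A`, `B` and `λ > 0`,
`|tr((A + λI)⁻¹) - tr((B + λI)⁻¹)| ≤ rank(A - B)/λ`. -/
theorem stmt_2 (p : ℕ) (A B : Matrix (Fin p) (Fin p) ℝ)
    (hA : A.PosSemidef) (hB : B.PosSemidef) (lam : ℝ) (hlam : 0 < lam) :
    |((A + lam • (1 : Matrix (Fin p) (Fin p) ℝ))⁻¹).trace -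
      ((B + lam • (1 : Matrix (Fin p) (Fin p) ℝ))⁻¹).trace| ≤
      ((A - B).rank : ℝ) / lam := by
  set M := (B + lam • (1 : Matrix (Fin p) (Fin p) ℝ))⁻¹ - (A + lam • 1)⁻¹
  have hA' := hA.posDef_add_smul_one hlam
  have hB' := hB.posDef_add_smul_one hlam
  have hM : M.IsHermitian := hB'.inv.isHermitian.sub hA'.inv.isHermitian
  have hrank : M.rank ≤ (A - B).rank := by
    simpa using rank_inv_sub_inv_le (iff_of_true hB'.isUnit hA'.isUnit)
  have hMIcc : M ∈ Set.Icc (-(lam⁻¹ • 1)) (lam⁻¹ • 1) := by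
    obtain ⟨hA0, hA1⟩ := hA.inv_add_smul_one_mem_Icc hlam
    obtain ⟨hB0, hB1⟩ := hB.inv_add_smul_one_mem_Icc hlam
    exact ⟨by simpa only [zero_sub] using sub_le_sub hB0 hA1,
      by simpa only [sub_zero] using sub_le_sub hB1 hA0⟩
  calc |((A + lam • 1)⁻¹).trace - ((B + lam • 1)⁻¹).trace| = ‖M.trace‖ := by
        rw [trace_sub, Real.norm_eq_abs, abs_sub_comm]
    _ ≤ M.rank * lam⁻¹ := hM.norm_trace_le_rank_mul (hM.abs_eigenvalues_le hMIcc)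
    _ ≤ (A - B).rank * lam⁻¹ := by gcongr
    _ = (A - B).rank / lam := (div_eq_mul_inv _ _).symm
end

section
/- Let A and B be real symmetric positive semidefinite p×p matrices and let λ > 0. Then |tr((A + λI_p)⁻²) − tr((B + λI_p)⁻²)| ≤ rank(A − B)/λ². -/
/-!
Put `M = A + λ I` and `N = B + λ I`. Their spectra lie in `[λ, ∞)`, where `x ↦ x⁻²` is antitone
with values in `[0, λ⁻²]`, and both traces are sums of this function over the eigenvalues.
On `ker (M - N)`, of codimension `r = rank (A - B)`, the quadratic forms of `M` and `N` agree, so a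
dimension count (Courant–Fischer style) gives `#{ν ≤ s} ≤ #{μ ≤ s} + r` for all thresholds `s`,
where `μ`, `ν` are the eigenvalues of `M`, `N`. Matching the eigenvalues of `N` against those of
`M` in increasing order, all but `r` of them find a partner that is not larger, and each of the
`r` unmatched ones contributes at most `λ⁻²`.
-/

open Finset Module Matrix
open scoped InnerProductSpace MatrixOrder ComplexOrder

section Counting

variable {κ α : Type*} [LinearOrder α] {ν : κ → α} {T : Finset κ} {i₀ : κ}

theorem Finset.card_filter_le_pos_iff_of_forall_le (hi₀ : i₀ ∈ T) (hmin : ∀ i ∈ T, ν i₀ ≤ ν i)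
    (s : α) : 0 < #{i ∈ T | ν i ≤ s} ↔ ν i₀ ≤ s := by
  rw [card_pos]
  exact ⟨fun ⟨i, hi⟩ => (mem_filter.1 hi).elim fun hiT hs => (hmin i hiT).trans hs,
    fun hs => ⟨i₀, mem_filter.2 ⟨hi₀, hs⟩⟩⟩

theorem Finset.card_filter_le_erase_of_forall_le [DecidableEq κ] (hi₀ : i₀ ∈ T)
    (hmin : ∀ i ∈ T, ν i₀ ≤ ν i) (s : α) :
    #{i ∈ T.erase i₀ | ν i ≤ s} = #{i ∈ T | ν i ≤ s} - 1 := by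
  rw [filter_erase, card_erase_eq_ite]
  split_ifs with h
  · rfl
  · rw [Nat.eq_zero_of_not_pos fun hpos =>
      h (mem_filter.2 ⟨hi₀, (card_filter_le_pos_iff_of_forall_le hi₀ hmin s).1 hpos⟩)]

end Counting

theorem Finset.sum_le_sum_add_mul_of_card_filter_le {ι κ α : Type*} [LinearOrder α] [Nonempty α]
    {f : α → ℝ} {c : ℝ} (hf : Antitone f) (hf0 : ∀ x, 0 ≤ f x) (hfc : ∀ x, f x ≤ c)
    (μ : ι → α) (ν : κ → α) (S : Finset ι) (T : Finset κ) (r : ℕ)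
    (h : ∀ s, #{i ∈ T | ν i ≤ s} ≤ #{j ∈ S | μ j ≤ s} + r) :
    ∑ i ∈ T, f (ν i) ≤ ∑ j ∈ S, f (μ j) + r * c := by
  classical
  induction T using Finset.strongInduction generalizing S r with | H T ih =>
  rcases T.eq_empty_or_nonempty with rfl | hT
  · have hc : 0 ≤ c := (hf0 (Classical.arbitrary α)).trans (hfc _)
    rw [sum_empty]
    exact add_nonneg (sum_nonneg fun j _ => hf0 _) (by positivity)
  obtain ⟨i₀, hi₀, hmin⟩ := T.exists_min_image ν hT
  rw [← add_sum_erase T _ hi₀]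
  by_cases hS : ∃ j ∈ S, μ j ≤ ν i₀
  · obtain ⟨j₀, hj₀, hjmin⟩ := S.exists_min_image μ (hS.elim fun j hj => ⟨j, hj.1⟩)
    have hle : μ j₀ ≤ ν i₀ := hS.elim fun j hj => (hjmin j hj.1).trans hj.2
    have := ih _ (erase_ssubset hi₀) (S.erase j₀) r fun s => by
      have := card_filter_le_pos_iff_of_forall_le hi₀ hmin s
      have := card_filter_le_pos_iff_of_forall_le hj₀ hjmin s
      have := h s
      have : ν i₀ ≤ s → μ j₀ ≤ s := hle.trans
      rw [card_filter_le_erase_of_forall_le hi₀ hmin, card_filter_le_erase_of_forall_le hj₀ hjmin]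
      omega
    rw [← add_sum_erase S _ hj₀]
    linarith [hf hle]
  · -- no partner for `ν i₀`: it is paid for by one unit of `r`
    push Not at hS
    obtain ⟨r, rfl⟩ : ∃ r', r = r' + 1 := by
      have := h (ν i₀)
      rw [filter_false_of_mem fun j hj => not_le.2 (hS j hj), card_empty] at this
      have := (card_filter_le_pos_iff_of_forall_le hi₀ hmin (ν i₀)).2 le_rfl
      exact ⟨r - 1, by omega⟩
    have := ih _ (erase_ssubset hi₀) S r fun s => by
      rw [card_filter_le_erase_of_forall_le hi₀ hmin]
      have := h s
      omega
    push_cast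
    linarith [hfc (ν i₀)]

theorem Submodule.finrank_add_finrank_add_finrank_le_of_disjoint {K V : Type*} [DivisionRing K]
    [AddCommGroup V] [Module K V] [FiniteDimensional K V] {U U' W : Submodule K V}
    (h : Disjoint (U ⊓ U') W) : finrank K U + finrank K U' + finrank K W ≤ 2 * finrank K V := by
  have := finrank_sup_add_finrank_inf_eq U U'
  have := finrank_le (U ⊔ U')
  have := finrank_add_finrank_le_of_disjoint h
  omega

namespace OrthonormalBasis

variable {𝕜 E ι : Type*} [RCLike 𝕜] [NormedAddCommGroup E] [InnerProductSpace 𝕜 E] [Fintype ι]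
  (b : OrthonormalBasis ι 𝕜 E)

theorem finrank_span_image (s : Finset ι) : finrank 𝕜 (Submodule.span 𝕜 (b '' s)) = #s := by
  rw [Set.image_eq_range, finrank_span_eq_card (b := fun i : (s : Set ι) => b i)
    (b.orthonormal.linearIndependent.comp _ Subtype.val_injective)]
  exact Fintype.card_coe s

theorem inner_eq_zero_of_mem_span_image {s : Finset ι} {x : E}
    (hx : x ∈ Submodule.span 𝕜 (b '' s)) {j : ι} (hj : j ∉ s) : ⟪b j, x⟫_𝕜 = 0 := by
  refine Submodule.mem_orthogonal_singleton_iff_inner_right.1 (Submodule.span_le.2 ?_ hx)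
  rintro - ⟨i, hi, rfl⟩
  exact Submodule.mem_orthogonal_singleton_iff_inner_right.2
    (b.orthonormal.2 fun h => hj (h ▸ hi))

variable {b} {T : E →ₗ[𝕜] E} {μ : ι → ℝ}

theorem re_inner_apply_self_eq_sum (hT : ∀ i, T (b i) = (μ i : 𝕜) • b i) (x : E) :
    RCLike.re ⟪x, T x⟫_𝕜 = ∑ i, μ i * ‖⟪b i, x⟫_𝕜‖ ^ 2 := by
  nth_rw 2 [← b.sum_repr' x]
  simp only [map_sum, map_smul, hT, smul_smul, inner_sum, inner_smul_right]
  refine sum_congr rfl fun i _ => ?_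
  rw [← inner_conj_symm, mul_comm, ← mul_assoc, RCLike.mul_conj, RCLike.norm_conj,
    ← RCLike.ofReal_pow, ← RCLike.ofReal_mul, RCLike.ofReal_re, mul_comm]

theorem re_inner_apply_self_le (hT : ∀ i, T (b i) = (μ i : 𝕜) • b i) {s : ℝ} {x : E}
    (hx : ∀ i, s < μ i → ⟪b i, x⟫_𝕜 = 0) : RCLike.re ⟪x, T x⟫_𝕜 ≤ s * ‖x‖ ^ 2 := by
  rw [re_inner_apply_self_eq_sum hT, ← b.sum_sq_norm_inner_right, mul_sum]
  refine sum_le_sum fun i _ => ?_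
  rcases le_or_gt (μ i) s with hi | hi
  · gcongr
  · simp [hx i hi]

theorem lt_re_inner_apply_self (hT : ∀ i, T (b i) = (μ i : 𝕜) • b i) {s : ℝ} {x : E}
    (hx0 : x ≠ 0) (hx : ∀ i, μ i ≤ s → ⟪b i, x⟫_𝕜 = 0) : s * ‖x‖ ^ 2 < RCLike.re ⟪x, T x⟫_𝕜 := by
  rw [re_inner_apply_self_eq_sum hT, ← b.sum_sq_norm_inner_right, mul_sum]
  obtain ⟨i₀, hi₀⟩ : ∃ i, ⟪b i, x⟫_𝕜 ≠ 0 := by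
    by_contra! h
    exact hx0 (by simpa [h] using (b.sum_repr' x).symm)
  refine sum_lt_sum (fun i _ => ?_) ⟨i₀, mem_univ _, ?_⟩
  · rcases le_or_gt (μ i) s with hi | hi
    · simp [hx i hi]
    · gcongr
  · have := lt_of_not_ge fun h => hi₀ (hx i₀ h)
    gcongr

theorem card_filter_le_card_filter_add_finrank_range_sub (b' : OrthonormalBasis ι 𝕜 E)
    {T' : E →ₗ[𝕜] E} {ν : ι → ℝ} (hT : ∀ i, T (b i) = (μ i : 𝕜) • b i)
    (hT' : ∀ i, T' (b' i) = (ν i : 𝕜) • b' i) (s : ℝ) :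
    #{i | ν i ≤ s} ≤ #{i | μ i ≤ s} + finrank 𝕜 (LinearMap.range (T - T')) := by
  set V := Submodule.span 𝕜 (b' '' ({i | ν i ≤ s} : Finset ι))
  set W := Submodule.span 𝕜 (b '' ({i | ¬μ i ≤ s} : Finset ι))
  have hdisj : Disjoint (V ⊓ LinearMap.ker (T - T')) W := by
    refine Submodule.disjoint_def.2 fun x hx hxW => by_contra fun hx0 => ?_
    obtain ⟨hxV, hxK⟩ := Submodule.mem_inf.1 hx
    have hTx : T x = T' x := sub_eq_zero.1 hxK
    have hle := re_inner_apply_self_le hT' (s := s) (x := x) fun i hi =>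
      b'.inner_eq_zero_of_mem_span_image hxV (by simpa using hi)
    have hlt := lt_re_inner_apply_self hT (s := s) hx0 fun i hi =>
      b.inner_eq_zero_of_mem_span_image hxW (by simpa using hi)
    rw [hTx] at hlt
    exact hlt.not_ge hle
  have : FiniteDimensional 𝕜 E := b.toBasis.finiteDimensional_of_finite
  have hdim := Submodule.finrank_add_finrank_add_finrank_le_of_disjoint hdisj
  have hrank := LinearMap.finrank_range_add_finrank_ker (T - T')
  rw [b'.finrank_span_image, b.finrank_span_image] at hdim
  rw [finrank_eq_card_basis b.toBasis] at hdim hrank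
  have := card_filter_add_card_filter_not (s := univ) (fun i => μ i ≤ s)
  rw [card_univ] at this
  omega

end OrthonormalBasis

namespace Matrix

theorem rank_neg {m n R : Type*} [Fintype n] [CommRing R] (A : Matrix m n R) :
    (-A).rank = A.rank := by
  rw [← neg_one_smul R A, rank_smul_of_mem_nonZeroDivisors _ isUnit_one.neg.mem_nonZeroDivisors]

theorem IsHermitian.add_smul_one {𝕜 n : Type*} [RCLike 𝕜] [DecidableEq n] {A : Matrix n n 𝕜}
    (hA : A.IsHermitian) (r : ℝ) : (A + r • 1).IsHermitian :=
  hA.add (isHermitian_one.smul (IsSelfAdjoint.all r))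

variable {𝕜 n : Type*} [RCLike 𝕜] [Fintype n] [DecidableEq n]

theorem rank_eq_finrank_range_toEuclideanLin {m : Type*} [Fintype m] (A : Matrix m n 𝕜) :
    A.rank = finrank 𝕜 (LinearMap.range (toEuclideanLin A)) := by
  rw [toEuclideanLin_eq_toLin_orthonormal]
  exact rank_eq_finrank_range_toLin A _ _

theorem IsHermitian.toEuclideanLin_eigenvectorBasis {A : Matrix n n 𝕜} (hA : A.IsHermitian)
    (i : n) : toEuclideanLin A (hA.eigenvectorBasis i) =
      (hA.eigenvalues i : 𝕜) • hA.eigenvectorBasis i := by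
  rw [toLpLin_apply, hA.mulVec_eigenvectorBasis, RCLike.real_smul_eq_coe_smul (K := 𝕜)]
  rfl

theorem IsHermitian.card_eigenvalues_le_le_add_rank_sub {A B : Matrix n n 𝕜}
    (hA : A.IsHermitian) (hB : B.IsHermitian) (s : ℝ) :
    #{i | hB.eigenvalues i ≤ s} ≤ #{i | hA.eigenvalues i ≤ s} + (A - B).rank := by
  rw [rank_eq_finrank_range_toEuclideanLin, map_sub]
  exact hA.eigenvectorBasis.card_filter_le_card_filter_add_finrank_range_sub hB.eigenvectorBasis
    hA.toEuclideanLin_eigenvectorBasis hB.toEuclideanLin_eigenvectorBasis s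

theorem IsHermitian.trace_cfc {A : Matrix n n 𝕜} (hA : A.IsHermitian) (f : ℝ → ℝ) :
    (cfc f A).trace = ∑ i, (f (hA.eigenvalues i) : 𝕜) := by
  rw [hA.cfc_eq, IsHermitian.cfc, Unitary.conjStarAlgAut_apply, trace_mul_cycle,
    Unitary.coe_star_mul_self, one_mul, trace_diagonal]
  rfl

theorem IsHermitian.trace_inv_pow {A : Matrix n n 𝕜} (hA : A.IsHermitian)
    (h0 : 0 ∉ spectrum ℝ A) (k : ℕ) :
    (A⁻¹ ^ k).trace = ∑ i, (((hA.eigenvalues i)⁻¹ ^ k : ℝ) : 𝕜) := by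
  have hinv : ContinuousOn (fun x : ℝ => x⁻¹) (spectrum ℝ A) :=
    continuousOn_inv₀.mono fun x hx h => h0 (h ▸ hx)
  rw [nonsing_inv_eq_ringInverse,
    ← cfc_ringInverse_id (R := ℝ) _ ((spectrum.zero_notMem_iff ℝ).1 h0) hA.isSelfAdjoint,
    ← cfc_pow _ _ _ hinv hA.isSelfAdjoint, hA.trace_cfc]

theorem PosSemidef.le_of_mem_spectrum_add_smul_one {A : Matrix n n 𝕜} (hA : A.PosSemidef)
    {r x : ℝ} (hx : x ∈ spectrum ℝ (A + r • 1)) : r ≤ x := by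
  have hle : algebraMap ℝ (Matrix n n 𝕜) r ≤ A + r • 1 := by
    rw [Matrix.le_iff, Algebra.algebraMap_eq_smul_one, add_sub_cancel_right]
    exact hA
  exact (algebraMap_le_iff_le_spectrum (hA.1.add_smul_one r).isSelfAdjoint).1 hle x hx

end Matrix

/-- For PSD matrices `A`, `B` and `λ > 0`,
`|tr((A + λI)⁻²) - tr((B + λI)⁻²)| ≤ rank(A - B)/λ²`. -/
theorem stmt_3 (p : ℕ) (A B : Matrix (Fin p) (Fin p) ℝ)
    (hA : A.PosSemidef) (hB : B.PosSemidef) (lam : ℝ) (hlam : 0 < lam) :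
    |(((A + lam • (1 : Matrix (Fin p) (Fin p) ℝ))⁻¹ ^ 2)).trace -
      (((B + lam • (1 : Matrix (Fin p) (Fin p) ℝ))⁻¹ ^ 2)).trace| ≤
      ((A - B).rank : ℝ) / lam ^ 2 := by
  set f : ℝ → ℝ := fun x => (max x lam)⁻¹ ^ 2
  have hf : Antitone f := fun x y hxy => by
    have : 0 < max x lam := hlam.trans_le (le_max_right x lam)
    dsimp only [f]
    gcongr
  have hf0 (x : ℝ) : 0 ≤ f x := by positivity
  have hfc (x : ℝ) : f x ≤ lam⁻¹ ^ 2 := by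
    dsimp only [f]
    gcongr
    exact le_max_right x lam
  have htrace {C : Matrix (Fin p) (Fin p) ℝ} (hC : C.IsHermitian)
      (hspec : ∀ x ∈ spectrum ℝ C, lam ≤ x) : (C⁻¹ ^ 2).trace = ∑ i, f (hC.eigenvalues i) := by
    rw [hC.trace_inv_pow fun h0 => (hspec 0 h0).not_gt hlam]
    refine sum_congr rfl fun i _ => ?_
    simp [f, max_eq_left (hspec _ (hC.eigenvalues_mem_spectrum_real i))]
  have hM := hA.1.add_smul_one lam
  have hN := hB.1.add_smul_one lam
  have hMN : A + lam • 1 - (B + lam • 1) = A - B := add_sub_add_right_eq_sub A B _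
  rw [htrace hM fun x => hA.le_of_mem_spectrum_add_smul_one,
    htrace hN fun x => hB.le_of_mem_spectrum_add_smul_one, abs_sub_le_iff, div_eq_mul_inv,
    ← inv_pow, sub_le_iff_le_add', sub_le_iff_le_add']
  constructor
  · refine sum_le_sum_add_mul_of_card_filter_le hf hf0 hfc _ _ _ _ _ fun s => ?_
    rw [← hMN, ← rank_neg, neg_sub]
    exact hN.card_eigenvalues_le_le_add_rank_sub hM s
  · refine sum_le_sum_add_mul_of_card_filter_le hf hf0 hfc _ _ _ _ _ fun s => ?_
    rw [← hMN]
    exact hM.card_eigenvalues_le_le_add_rank_sub hN s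
end

section
/- Let A and B be real symmetric positive semidefinite p×p matrices, let M be a real symmetric p×p matrix, and let λ > 0. Then |tr[((A + λI_p)⁻¹ − (B + λI_p)⁻¹) M]| ≤ (2‖M‖/λ) · rank(A − B), where ‖M‖ denotes the spectral (operator) norm of M. -/
open Matrix
open scoped Matrix.Norms.L2Operator

section Aux

variable {p : ℕ}

private lemma my_mulVecLin_neg (X : Matrix (Fin p) (Fin p) ℝ) :
    (-X).mulVecLin = -X.mulVecLin := by
  apply LinearMap.ext; intro v; simp [Matrix.mulVecLin_apply, Matrix.neg_mulVec]

private lemma my_rank_neg (X : Matrix (Fin p) (Fin p) ℝ) : (-X).rank = X.rank := by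
  unfold Matrix.rank
  rw [my_mulVecLin_neg, LinearMap.range_neg]

private lemma my_smul_one_posDef {lam : ℝ} (h : 0 < lam) :
    (lam • (1 : Matrix (Fin p) (Fin p) ℝ)).PosDef := by
  rw [Matrix.smul_one_eq_diagonal]
  exact Matrix.PosDef.diagonal (fun _ => h)

private lemma my_dot_self_nonneg (v : Fin p → ℝ) : 0 ≤ v ⬝ᵥ v :=
  Finset.sum_nonneg fun _ _ => mul_self_nonneg _

private lemma my_cs (v w : Fin p → ℝ) : (v ⬝ᵥ w)^2 ≤ (v ⬝ᵥ v) * (w ⬝ᵥ w) := by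
  simpa [dotProduct, sq] using Finset.sum_mul_sq_le_sq_mul_sq Finset.univ v w

/-- For PSD `C` and `lam > 0`, `v ⬝ᵥ (C + lam•1)⁻¹ v ≤ (v ⬝ᵥ v)/lam`. -/
private lemma my_quad_bound {C : Matrix (Fin p) (Fin p) ℝ} (hC : C.PosSemidef)
    {lam : ℝ} (hlam : 0 < lam)
    (hN : (C + lam • (1 : Matrix (Fin p) (Fin p) ℝ)).PosDef) (v : Fin p → ℝ) :
    v ⬝ᵥ ((C + lam • (1 : Matrix (Fin p) (Fin p) ℝ))⁻¹ *ᵥ v) ≤ (v ⬝ᵥ v) / lam := by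
  set N := C + lam • (1 : Matrix (Fin p) (Fin p) ℝ) with hNdef
  set w := N⁻¹ *ᵥ v with hw
  have hv : N *ᵥ w = v := by
    rw [hw, Matrix.mulVec_mulVec, Matrix.mul_nonsing_inv _ (isUnit_iff_ne_zero.mpr hN.det_pos.ne'),
      Matrix.one_mulVec]
  have hNw : N *ᵥ w = C *ᵥ w + lam • w := by
    rw [hNdef, Matrix.add_mulVec, Matrix.smul_mulVec, Matrix.one_mulVec]
  have hCw : 0 ≤ w ⬝ᵥ (C *ᵥ w) := by simpa using hC.dotProduct_mulVec_nonneg w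
  have h1 : lam * (w ⬝ᵥ w) ≤ v ⬝ᵥ w := by
    calc lam * (w ⬝ᵥ w) ≤ w ⬝ᵥ (C *ᵥ w) + lam * (w ⬝ᵥ w) := by linarith
    _ = v ⬝ᵥ w := by
        rw [← hv, hNw, dotProduct_comm]
        simp [add_dotProduct, smul_dotProduct, dotProduct_comm w]
  have h2 := my_cs v w
  have hww := my_dot_self_nonneg w
  have hvv := my_dot_self_nonneg v
  rcases le_or_gt (v ⬝ᵥ w) 0 with h | h
  · exact h.trans (by positivity)
  · rw [le_div_iff₀ hlam]
    nlinarith [h1, h2, hww, hvv]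

private lemma my_trace_diag_mul (d : Fin p → ℝ) (Y : Matrix (Fin p) (Fin p) ℝ) :
    ((diagonal d) * Y).trace = ∑ i, d i * Y i i := by
  simp [Matrix.trace, Matrix.diag, Matrix.mul_apply, Matrix.diagonal]

private lemma my_trace_decomp (D M : Matrix (Fin p) (Fin p) ℝ) (hD : D.IsHermitian) :
    (D * M).trace = ∑ i, hD.eigenvalues i *
      ((fun j => (hD.eigenvectorUnitary : Matrix (Fin p) (Fin p) ℝ) j i) ⬝ᵥ
        (M *ᵥ fun j => (hD.eigenvectorUnitary : Matrix (Fin p) (Fin p) ℝ) j i)) := by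
  set U : Matrix (Fin p) (Fin p) ℝ := (hD.eigenvectorUnitary : Matrix (Fin p) (Fin p) ℝ) with hU
  conv_lhs => rw [hD.spectral_theorem, Unitary.conjStarAlgAut_apply]
  have h1 : (U * diagonal (RCLike.ofReal ∘ hD.eigenvalues) * star U) * M
      = U * ((diagonal (RCLike.ofReal ∘ hD.eigenvalues)) * ((star U) * M)) := by
    simp only [mul_assoc]
  rw [h1, Matrix.trace_mul_comm, mul_assoc, mul_assoc, my_trace_diag_mul]
  all_goals
    refine Finset.sum_congr rfl fun i _ => ?_
    have h2 : (RCLike.ofReal ∘ hD.eigenvalues) i = hD.eigenvalues i := rfl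
    rw [h2]
    try congr 1
    try simp only [Matrix.mul_apply, Matrix.star_apply, star_trivial, Matrix.dotProduct,
      Matrix.mulVec, Matrix.dotProduct, Finset.sum_mul, Finset.mul_sum]

end Aux

/-- For PSD `A`, `B`, symmetric `M` and `λ > 0`,
`|tr[((A+λI)⁻¹ - (B+λI)⁻¹) M]| ≤ (2‖M‖/λ) rank(A - B)`, where `‖M‖` is the
spectral (L2 operator) norm. -/
theorem stmt_5 (p : ℕ) (A B M : Matrix (Fin p) (Fin p) ℝ)
    (hA : A.PosSemidef) (hB : B.PosSemidef) (hM : M.IsSymm)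
    (lam : ℝ) (hlam : 0 < lam) :
    |((((A + lam • (1 : Matrix (Fin p) (Fin p) ℝ))⁻¹ -
        (B + lam • (1 : Matrix (Fin p) (Fin p) ℝ))⁻¹) * M)).trace| ≤
      (2 * ‖M‖ / lam) * ((A - B).rank : ℝ) := by
  set NA := A + lam • (1 : Matrix (Fin p) (Fin p) ℝ) with hNAdef
  set NB := B + lam • (1 : Matrix (Fin p) (Fin p) ℝ) with hNBdef
  have hNA : NA.PosDef := Matrix.PosDef.posSemidef_add hA (my_smul_one_posDef hlam)
  have hNB : NB.PosDef := Matrix.PosDef.posSemidef_add hB (my_smul_one_posDef hlam)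
  set D := NA⁻¹ - NB⁻¹ with hDdef
  have hD : D.IsHermitian := (hNA.inv.isHermitian).sub (hNB.inv.isHermitian)
  set U : Matrix (Fin p) (Fin p) ℝ := (hD.eigenvectorUnitary : Matrix (Fin p) (Fin p) ℝ) with hU
  -- the (coerced) eigenvectors
  set v : Fin p → Fin p → ℝ := fun i j => U j i with hv
  have hv_basis : ∀ i, v i = ⇑(hD.eigenvectorBasis i) := by
    intro i; funext j; simp [hv, hU]
  have hv_norm : ∀ i, ‖hD.eigenvectorBasis i‖ = 1 := fun i =>
    hD.eigenvectorBasis.orthonormal.1 i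
  have hv_dot : ∀ i, v i ⬝ᵥ v i = 1 := by
    intro i
    have := real_inner_self_eq_norm_mul_norm (hD.eigenvectorBasis i)
    rw [hv_norm i, one_mul] at this
    have h2 : (inner ℝ (hD.eigenvectorBasis i) (hD.eigenvectorBasis i) : ℝ)
        = v i ⬝ᵥ v i := by
      rw [EuclideanSpace.inner_eq_star_dotProduct, hv_basis i]
      simp [dotProduct]
    rw [h2] at this
    simpa using this
  -- bound on quadratic forms of M
  have hq : ∀ i, |v i ⬝ᵥ (M *ᵥ v i)| ≤ ‖M‖ := by
    intro i
    set x : EuclideanSpace ℝ (Fin p) := hD.eigenvectorBasis i with hx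
    have h1 : v i ⬝ᵥ (M *ᵥ v i)
        = (inner ℝ x ((EuclideanSpace.equiv (Fin p) ℝ).symm (M *ᵥ ⇑x)) : ℝ) := by
      rw [EuclideanSpace.inner_eq_star_dotProduct, hv_basis i]
      rw [dotProduct_comm]; rfl
    rw [h1]
    calc |(inner ℝ x ((EuclideanSpace.equiv (Fin p) ℝ).symm (M *ᵥ ⇑x)) : ℝ)|
        ≤ ‖x‖ * ‖(EuclideanSpace.equiv (Fin p) ℝ).symm (M *ᵥ ⇑x)‖ := abs_real_inner_le_norm _ _
      _ ≤ ‖x‖ * (‖M‖ * ‖x‖) :=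
          mul_le_mul_of_nonneg_left (M.l2_opNorm_mulVec x) (norm_nonneg x)
      _ = ‖M‖ := by rw [hv_norm i]; ring
  -- bound on eigenvalues
  have heig : ∀ i, |hD.eigenvalues i| ≤ 2 / lam := by
    intro i
    have he := hD.eigenvalues_eq i
    have he' : hD.eigenvalues i = v i ⬝ᵥ (D *ᵥ v i) := by
      rw [he, hv_basis i]
      simp [dotProduct]
    have hsplit : v i ⬝ᵥ (D *ᵥ v i)
        = v i ⬝ᵥ (NA⁻¹ *ᵥ v i) - v i ⬝ᵥ (NB⁻¹ *ᵥ v i) := by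
      rw [hDdef, Matrix.sub_mulVec, dotProduct_sub]
    have hA0 : 0 ≤ v i ⬝ᵥ (NA⁻¹ *ᵥ v i) := by simpa using hNA.inv.posSemidef.dotProduct_mulVec_nonneg (v i)
    have hB0 : 0 ≤ v i ⬝ᵥ (NB⁻¹ *ᵥ v i) := by simpa using hNB.inv.posSemidef.dotProduct_mulVec_nonneg (v i)
    have hA1 : v i ⬝ᵥ (NA⁻¹ *ᵥ v i) ≤ 1 / lam := by
      have := my_quad_bound hA hlam hNA (v i)
      rwa [hv_dot i] at this
    have hB1 : v i ⬝ᵥ (NB⁻¹ *ᵥ v i) ≤ 1 / lam := by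
      have := my_quad_bound hB hlam hNB (v i)
      rwa [hv_dot i] at this
    rw [he', hsplit, abs_sub_le_iff]
    constructor <;> rw [show (2:ℝ)/lam = 1/lam + 1/lam by ring] <;> nlinarith
  -- rank bound
  have hrank : D.rank ≤ (A - B).rank := by
    have hAU : IsUnit NA.det := isUnit_iff_ne_zero.mpr hNA.det_pos.ne'
    have hBU : IsUnit NB.det := isUnit_iff_ne_zero.mpr hNB.det_pos.ne'
    have hinv : D = NA⁻¹ * ((NB - NA) * NB⁻¹) := by
      have e : NA⁻¹ * ((NB - NA) * NB⁻¹) = NA⁻¹ * (NB * NB⁻¹) - NA⁻¹ * NA * NB⁻¹ := by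
        noncomm_ring
      rw [hDdef, e, Matrix.mul_nonsing_inv _ hBU, Matrix.nonsing_inv_mul _ hAU, mul_one, one_mul]
    have h2 : NB - NA = -(A - B) := by rw [hNAdef, hNBdef]; abel
    calc D.rank ≤ ((NB - NA) * NB⁻¹).rank := by rw [hinv]; exact Matrix.rank_mul_le_right _ _
      _ ≤ (NB - NA).rank := Matrix.rank_mul_le_left _ _
      _ = (A - B).rank := by rw [h2, my_rank_neg]
  -- put everything together
  rw [my_trace_decomp D M hD]
  have habs : |∑ i, hD.eigenvalues i * (v i ⬝ᵥ (M *ᵥ v i))|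
      ≤ ∑ i ∈ Finset.univ.filter (fun i => hD.eigenvalues i ≠ 0),
          |hD.eigenvalues i * (v i ⬝ᵥ (M *ᵥ v i))| := by
    calc |∑ i, hD.eigenvalues i * (v i ⬝ᵥ (M *ᵥ v i))|
        ≤ ∑ i, |hD.eigenvalues i * (v i ⬝ᵥ (M *ᵥ v i))| := Finset.abs_sum_le_sum_abs _ _
      _ = ∑ i ∈ Finset.univ.filter (fun i => hD.eigenvalues i ≠ 0),
          |hD.eigenvalues i * (v i ⬝ᵥ (M *ᵥ v i))| := by
          rw [Finset.sum_filter_of_ne]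
          intro i _ h
          contrapose! h
          simp [h]
  have hbound : ∑ i ∈ Finset.univ.filter (fun i => hD.eigenvalues i ≠ 0),
      |hD.eigenvalues i * (v i ⬝ᵥ (M *ᵥ v i))|
      ≤ (Finset.univ.filter (fun i => hD.eigenvalues i ≠ 0)).card * (2 / lam * ‖M‖) := by
    have key := Finset.sum_le_card_nsmul (Finset.univ.filter (fun i => hD.eigenvalues i ≠ 0))
      (fun i => |hD.eigenvalues i * (v i ⬝ᵥ (M *ᵥ v i))|) (2 / lam * ‖M‖) (fun i _ => by
        show |hD.eigenvalues i * (v i ⬝ᵥ (M *ᵥ v i))| ≤ 2 / lam * ‖M‖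
        rw [abs_mul]
        exact mul_le_mul (heig i) (hq i) (abs_nonneg _) (by positivity))
    simpa [nsmul_eq_mul] using key
  have hcard : ((Finset.univ.filter (fun i => hD.eigenvalues i ≠ 0)).card : ℝ) = (D.rank : ℝ) := by
    rw [hD.rank_eq_card_non_zero_eigs]
    norm_cast
    exact (Fintype.card_subtype _).symm
  have hM0 : (0:ℝ) ≤ ‖M‖ := norm_nonneg _
  calc |∑ i, hD.eigenvalues i * (v i ⬝ᵥ (M *ᵥ v i))|
      ≤ (Finset.univ.filter (fun i => hD.eigenvalues i ≠ 0)).card * (2 / lam * ‖M‖) := by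
        refine habs.trans ?_
        simpa using hbound
    _ = (D.rank : ℝ) * (2 / lam * ‖M‖) := by rw [hcard]
    _ ≤ ((A - B).rank : ℝ) * (2 / lam * ‖M‖) := by
        have hc : (D.rank : ℝ) ≤ ((A - B).rank : ℝ) := by exact_mod_cast hrank
        exact mul_le_mul_of_nonneg_right hc (by positivity)
    _ = (2 * ‖M‖ / lam) * ((A - B).rank : ℝ) := by ring
end

section
/- Let U be a random variable with 0 ≤ U ≤ 1 almost surely, and set β_j = E[U^j] for j = 1, 2, 3. Then −2β₁² + β₁β₂ + 2β₂ − β₃ = E[(1 − U)(U − β₁)²] + (1 − β₁)(β₂ − β₁²), and consequently −2β₁² + β₁β₂ + 2β₂ − β₃ ≥ 0. -/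
open MeasureTheory ProbabilityTheory

/-
The identity is the expansion of `(1 - U)(U - β₁)²` integrated term by term. Both summands on
its right-hand side are nonnegative when `0 ≤ U ≤ 1`: the first because `1 - U ≥ 0` pointwise,
the second because `β₁ ≤ 1` and `β₂ - β₁² = Var U ≥ 0`.
-/

section Moments

variable {Ω : Type*} [MeasurableSpace Ω] {μ : Measure Ω} {U : Ω → ℝ}

lemma integrable_pow_of_ae_norm_le [IsFiniteMeasure μ] (hU : AEStronglyMeasurable U μ) {C : ℝ}
    (hC : ∀ᵐ ω ∂μ, ‖U ω‖ ≤ C) (n : ℕ) : Integrable (fun ω => U ω ^ n) μ :=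
  Integrable.of_bound (hU.pow n) (C ^ n) <| hC.mono fun _ h => by
    rw [norm_pow]
    exact pow_le_pow_left₀ (norm_nonneg _) h n

lemma integral_one_sub_mul_sub_sq [IsProbabilityMeasure μ] (h1 : Integrable U μ)
    (h2 : Integrable (fun ω => U ω ^ 2) μ) (h3 : Integrable (fun ω => U ω ^ 3) μ) (c : ℝ) :
    ∫ ω, (1 - U ω) * (U ω - c) ^ 2 ∂μ =
      (1 + 2 * c) * ∫ ω, U ω ^ 2 ∂μ - ∫ ω, U ω ^ 3 ∂μ - (2 * c + c ^ 2) * ∫ ω, U ω ∂μ + c ^ 2 := by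
  have hexpand : (fun ω => (1 - U ω) * (U ω - c) ^ 2) =
      fun ω => (1 + 2 * c) * U ω ^ 2 - U ω ^ 3 - (2 * c + c ^ 2) * U ω + c ^ 2 := by
    funext ω; ring
  have h2' : Integrable (fun ω => (1 + 2 * c) * U ω ^ 2) μ := h2.const_mul _
  have h1' : Integrable (fun ω => (2 * c + c ^ 2) * U ω) μ := h1.const_mul _
  have h23 : Integrable (fun ω => (1 + 2 * c) * U ω ^ 2 - U ω ^ 3) μ := h2'.sub h3
  have h231 : Integrable (fun ω => (1 + 2 * c) * U ω ^ 2 - U ω ^ 3 - (2 * c + c ^ 2) * U ω) μ :=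
    h23.sub h1'
  rw [hexpand, integral_add h231 (integrable_const _), integral_sub h23 h1', integral_sub h2' h3,
    integral_const_mul, integral_const_mul, integral_const, probReal_univ, one_smul]

end Moments

/-- For a random variable `U ∈ [0,1]` a.s. with moments `β_j = E[U^j]`,
`-2β₁² + β₁β₂ + 2β₂ - β₃ = E[(1-U)(U-β₁)²] + (1-β₁)(β₂-β₁²) ≥ 0`. -/
theorem stmt_9 {Ω : Type*} [MeasurableSpace Ω] (P : Measure Ω) [IsProbabilityMeasure P]
    (U : Ω → ℝ) (hU : Measurable U) (hb : ∀ᵐ ω ∂P, U ω ∈ Set.Icc (0 : ℝ) 1)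
    (β₁ β₂ β₃ : ℝ)
    (h1 : β₁ = ∫ ω, U ω ∂P) (h2 : β₂ = ∫ ω, (U ω) ^ 2 ∂P)
    (h3 : β₃ = ∫ ω, (U ω) ^ 3 ∂P) :
    -2 * β₁ ^ 2 + β₁ * β₂ + 2 * β₂ - β₃ =
        (∫ ω, (1 - U ω) * (U ω - β₁) ^ 2 ∂P) + (1 - β₁) * (β₂ - β₁ ^ 2) ∧
      0 ≤ -2 * β₁ ^ 2 + β₁ * β₂ + 2 * β₂ - β₃ := by
  have hnorm : ∀ᵐ ω ∂P, ‖U ω‖ ≤ 1 := hb.mono fun _ h => by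
    rw [Real.norm_eq_abs, abs_le]; exact ⟨by linarith [h.1], h.2⟩
  have hint := integrable_pow_of_ae_norm_le hU.aestronglyMeasurable hnorm
  have hidentity : -2 * β₁ ^ 2 + β₁ * β₂ + 2 * β₂ - β₃ =
      (∫ ω, (1 - U ω) * (U ω - β₁) ^ 2 ∂P) + (1 - β₁) * (β₂ - β₁ ^ 2) := by
    rw [integral_one_sub_mul_sub_sq (by simpa using hint 1) (hint 2) (hint 3), ← h1, ← h2, ← h3]
    ring
  have hvar : 0 ≤ β₂ - β₁ ^ 2 := by
    have := variance_nonneg U P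
    rw [h2]
    rwa [variance_eq_sub (MemLp.of_bound hU.aestronglyMeasurable 1 hnorm), ← h1] at this
  have hβ₁ : β₁ ≤ 1 := by
    rw [h1]
    simpa using integral_mono_ae (by simpa using hint 1) (integrable_const (1 : ℝ))
      (hb.mono fun _ h => h.2)
  have hcubic : 0 ≤ ∫ ω, (1 - U ω) * (U ω - β₁) ^ 2 ∂P :=
    integral_nonneg_of_ae <| hb.mono fun _ h => mul_nonneg (sub_nonneg.2 h.2) (sq_nonneg _)
  exact ⟨hidentity, hidentity ▸ add_nonneg hcubic (mul_nonneg (sub_nonneg.2 hβ₁) hvar)⟩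
end

section
/- Let U be a random variable with 0 ≤ U ≤ 1 almost surely, and set β_j = E[U^j] for j = 1, 2, 3. Then β₂² − β₁β₃ + β₁β₂ − β₁³ = (β₂ − β₁²)² + β₁ · E[(U − β₁)²(1 − U)], and consequently β₂² − β₁β₃ + β₁β₂ − β₁³ ≥ 0. -/
/-!
Expanding `(U - c)² (1 - U)` and integrating term by term expresses `E[(U - c)²(1 - U)]` through the
first three moments; at `c = β₁` this turns the claimed identity into a polynomial identity in
`β₁, β₂, β₃`. Both summands on its right-hand side are nonnegative because `0 ≤ U ≤ 1`.
-/

open MeasureTheory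

section
variable {Ω : Type*} [MeasurableSpace Ω] {P : Measure Ω} {U : Ω → ℝ}

lemma integrable_pow_of_ae_mem_Icc [IsFiniteMeasure P] (hU : AEMeasurable U P)
    (hb : ∀ᵐ ω ∂P, U ω ∈ Set.Icc (0 : ℝ) 1) (n : ℕ) : Integrable (fun ω ↦ U ω ^ n) P :=
  .of_mem_Icc 0 1 (hU.pow_const n) <| hb.mono fun _ h ↦ ⟨pow_nonneg h.1 n, pow_le_one₀ h.1 h.2⟩

lemma integral_sub_sq_mul_one_sub [IsProbabilityMeasure P] (hU₁ : Integrable U P)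
    (hU₂ : Integrable (fun ω ↦ U ω ^ 2) P) (hU₃ : Integrable (fun ω ↦ U ω ^ 3) P) (c : ℝ) :
    ∫ ω, (U ω - c) ^ 2 * (1 - U ω) ∂P =
      -∫ ω, U ω ^ 3 ∂P + (1 + 2 * c) * ∫ ω, U ω ^ 2 ∂P - (2 * c + c ^ 2) * ∫ ω, U ω ∂P + c ^ 2 := by
  have hexpand : (fun ω ↦ (U ω - c) ^ 2 * (1 - U ω)) =
      fun ω ↦ -U ω ^ 3 + (1 + 2 * c) * U ω ^ 2 - (2 * c + c ^ 2) * U ω + c ^ 2 := by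
    funext ω; ring
  rw [hexpand, integral_add, integral_sub, integral_add, integral_neg, integral_const_mul,
    integral_const_mul, integral_const, probReal_univ, one_smul]
  all_goals fun_prop

lemma integral_sub_sq_mul_one_sub_nonneg (hb : ∀ᵐ ω ∂P, U ω ≤ 1) (c : ℝ) :
    0 ≤ ∫ ω, (U ω - c) ^ 2 * (1 - U ω) ∂P :=
  integral_nonneg_of_ae <| hb.mono fun _ h ↦ mul_nonneg (sq_nonneg _) (sub_nonneg.2 h)

end

/-- For a random variable `U ∈ [0,1]` a.s. with moments `β_j = E[U^j]`,
`β₂² - β₁β₃ + β₁β₂ - β₁³ = (β₂ - β₁²)² + β₁ E[(U - β₁)²(1 - U)] ≥ 0`. -/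
theorem stmt_10 {Ω : Type*} [MeasurableSpace Ω] (P : Measure Ω) [IsProbabilityMeasure P]
    (U : Ω → ℝ) (hU : Measurable U) (hb : ∀ᵐ ω ∂P, U ω ∈ Set.Icc (0 : ℝ) 1)
    (β₁ β₂ β₃ : ℝ)
    (h1 : β₁ = ∫ ω, U ω ∂P) (h2 : β₂ = ∫ ω, (U ω) ^ 2 ∂P)
    (h3 : β₃ = ∫ ω, (U ω) ^ 3 ∂P) :
    β₂ ^ 2 - β₁ * β₃ + β₁ * β₂ - β₁ ^ 3 =
        (β₂ - β₁ ^ 2) ^ 2 + β₁ * ∫ ω, (U ω - β₁) ^ 2 * (1 - U ω) ∂P ∧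
      0 ≤ β₂ ^ 2 - β₁ * β₃ + β₁ * β₂ - β₁ ^ 3 := by
  have hint := integrable_pow_of_ae_mem_Icc hU.aemeasurable hb
  have hexpand := integral_sub_sq_mul_one_sub (by simpa using hint 1) (hint 2) (hint 3) β₁
  rw [← h1, ← h2, ← h3] at hexpand
  have hidentity : β₂ ^ 2 - β₁ * β₃ + β₁ * β₂ - β₁ ^ 3 =
      (β₂ - β₁ ^ 2) ^ 2 + β₁ * ∫ ω, (U ω - β₁) ^ 2 * (1 - U ω) ∂P := by
    rw [hexpand]; ring
  have hβ₁ : 0 ≤ β₁ := h1 ▸ integral_nonneg_of_ae (hb.mono fun _ h ↦ h.1)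
  refine ⟨hidentity, hidentity ▸ add_nonneg (sq_nonneg _) (mul_nonneg hβ₁ ?_)⟩
  exact integral_sub_sq_mul_one_sub_nonneg (hb.mono fun _ h ↦ h.2) β₁
end

section
/- Let U be a random variable with 0 ≤ U ≤ 1 almost surely, and set β_j = E[U^j] for j = 1, 2, 3. Then (β₁ − β₂)(β₂ − β₁²) + (β₁ − β₁²)(β₂ − β₃ − β₁² + β₁β₂) ≥ 0. -/
open MeasureTheory

/-- For a random variable `U ∈ [0,1]` a.s. with moments `β_j = E[U^j]`,
`(β₁-β₂)(β₂-β₁²) + (β₁-β₁²)(β₂-β₃-β₁²+β₁β₂) ≥ 0`. -/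
theorem stmt_12 {Ω : Type*} [MeasurableSpace Ω] (P : Measure Ω) [IsProbabilityMeasure P]
    (U : Ω → ℝ) (hU : Measurable U) (hb : ∀ᵐ ω ∂P, U ω ∈ Set.Icc (0 : ℝ) 1)
    (β₁ β₂ β₃ : ℝ)
    (h1 : β₁ = ∫ ω, U ω ∂P) (h2 : β₂ = ∫ ω, (U ω) ^ 2 ∂P)
    (h3 : β₃ = ∫ ω, (U ω) ^ 3 ∂P) :
    0 ≤ (β₁ - β₂) * (β₂ - β₁ ^ 2) + (β₁ - β₁ ^ 2) * (β₂ - β₃ - β₁ ^ 2 + β₁ * β₂) := by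
  have hint : ∀ n : ℕ, Integrable (fun ω => U ω ^ n) P := by
    intro n
    refine ⟨(hU.pow_const n).aestronglyMeasurable, ?_⟩
    refine HasFiniteIntegral.of_bounded (C := 1) (hb.mono fun ω h => ?_)
    rw [Real.norm_eq_abs, abs_pow]
    exact pow_le_one₀ (abs_nonneg _) (abs_le.2 ⟨by linarith [h.1], h.2⟩)
  have hintU : Integrable U P := by simpa using hint 1
  have hexp : ∀ c₀ c₁ c₂ c₃ : ℝ,
      ∫ ω, (c₀ + c₁ * U ω + c₂ * U ω ^ 2 + c₃ * U ω ^ 3) ∂P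
        = c₀ + c₁ * β₁ + c₂ * β₂ + c₃ * β₃ := by
    intro c₀ c₁ c₂ c₃
    have I0 : Integrable (fun _ : Ω => c₀) P := integrable_const _
    have I1 : Integrable (fun ω => c₁ * U ω) P := hintU.const_mul c₁
    have I2 : Integrable (fun ω => c₂ * U ω ^ 2) P := (hint 2).const_mul c₂
    have I3 : Integrable (fun ω => c₃ * U ω ^ 3) P := (hint 3).const_mul c₃
    have e3 : ∫ ω, (c₀ + c₁ * U ω + c₂ * U ω ^ 2 + c₃ * U ω ^ 3) ∂P
        = (∫ ω, (c₀ + c₁ * U ω + c₂ * U ω ^ 2) ∂P) + ∫ ω, c₃ * U ω ^ 3 ∂P :=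
      integral_add ((I0.add I1).add I2) I3
    have e2 : ∫ ω, (c₀ + c₁ * U ω + c₂ * U ω ^ 2) ∂P
        = (∫ ω, (c₀ + c₁ * U ω) ∂P) + ∫ ω, c₂ * U ω ^ 2 ∂P :=
      integral_add (I0.add I1) I2
    have e1 : ∫ ω, (c₀ + c₁ * U ω) ∂P = (∫ ω, (c₀ : ℝ) ∂P) + ∫ ω, c₁ * U ω ∂P :=
      integral_add I0 I1
    rw [e3, e2, e1, integral_const, integral_const_mul, integral_const_mul,
      integral_const_mul, h1, h2, h3]
    simp
  have hp0 : 0 ≤ β₁ := h1 ▸ integral_nonneg_of_ae (hb.mono fun ω h => h.1)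
  have hA : β₂ ≤ β₁ := by
    rw [h1, h2]
    exact integral_mono_ae (hint 2) hintU (hb.mono fun ω h => by
      dsimp only
      nlinarith [h.1, h.2])
  have hs : β₁ ^ 2 ≤ β₂ := by
    have h0 : (0 : ℝ) ≤ ∫ ω, (β₁ ^ 2 + (-(2 * β₁)) * U ω + 1 * U ω ^ 2 + 0 * U ω ^ 3) ∂P :=
      integral_nonneg_of_ae (Filter.Eventually.of_forall fun ω => by
        simp only [Pi.zero_apply]
        nlinarith [sq_nonneg (U ω - β₁)])
    rw [hexp] at h0
    linarith
  have hB0 : (0 : ℝ) ≤ ((β₂ - β₁ ^ 2) - (1 - β₁) * β₁) ^ 2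
      + (2 * (1 - β₁) * ((β₂ - β₁ ^ 2) - (1 - β₁) * β₁)
          - ((β₂ - β₁ ^ 2) - (1 - β₁) * β₁) ^ 2) * β₁
      + ((1 - β₁) ^ 2 - 2 * (1 - β₁) * ((β₂ - β₁ ^ 2) - (1 - β₁) * β₁)) * β₂
      + (-(1 - β₁) ^ 2) * β₃ := by
    have h0 := integral_nonneg_of_ae
      (f := fun ω => ((β₂ - β₁ ^ 2) - (1 - β₁) * β₁) ^ 2
        + (2 * (1 - β₁) * ((β₂ - β₁ ^ 2) - (1 - β₁) * β₁)
            - ((β₂ - β₁ ^ 2) - (1 - β₁) * β₁) ^ 2) * U ω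
        + ((1 - β₁) ^ 2 - 2 * (1 - β₁) * ((β₂ - β₁ ^ 2) - (1 - β₁) * β₁)) * U ω ^ 2
        + (-(1 - β₁) ^ 2) * U ω ^ 3)
      (hb.mono fun ω h => by
        simp only [Pi.zero_apply]
        nlinarith [mul_nonneg (sub_nonneg.2 h.2)
          (sq_nonneg ((1 - β₁) * (U ω - β₁) + (β₂ - β₁ ^ 2)))])
    rw [hexp] at h0
    exact h0
  have hp1 : β₁ ≤ 1 := by nlinarith
  rcases eq_or_lt_of_le hp1 with h | h
  · have hb2 : β₂ = 1 := by nlinarith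
    rw [h, hb2]
    norm_num
  · have h1p : 0 < 1 - β₁ := by linarith
    have hG : 0 ≤ (1 - β₁) *
        ((β₁ - β₂) * (β₂ - β₁ ^ 2) + (β₁ - β₁ ^ 2) * (β₂ - β₃ - β₁ ^ 2 + β₁ * β₂)) := by
      nlinarith [mul_nonneg hp0 hB0,
        mul_nonneg (mul_nonneg (sq_nonneg (1 - β₁)) (sub_nonneg.2 hs)) (sub_nonneg.2 hA)]
    nlinarith [hG, h1p]
end

section
/- Let γ > 0 and let X be a nonnegative random variable that is not almost surely constant, such that either γ ≥ 1 or P(X = 0) ≥ 1 − γ. For λ > 0 define β₁(λ) = E[λ/(X+λ)] and β₂(λ) = E[(λ/(X+λ))²]. Then the function λ ↦ (β₁(λ) − (1 − γ)) / (λ · √(β₂(λ) − β₁(λ)²)) is nonincreasing on (0, ∞). -/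
/-!
Write `U = X / (X + λ)`, a `[0, 1]`-valued variable, and `mₖ = E[Uᵏ]`. Then `β₁ = 1 - m₁` and
`β₂ - β₁² = m₂ - m₁² = Var U > 0`, while `mₖ' = -k (mₖ - mₖ₊₁) / λ`. Differentiating, the
function `(γ - m₁) / (λ √(m₂ - m₁²))` has derivative of the sign of
`(m₁ - m₂)(m₂ - m₁²) - (γ - m₁)(m₃ - m₁ m₂)`, so everything reduces to a moment inequality.

`U` vanishes off `{X ≠ 0}`, whose mass `ρ` is at most `γ`. On the restriction `ν` of `P` to
that set, `∫ (ρU - m₁)² (ρ(ρ - m₁)U + ρm₂ - m₁²) dν ≥ 0` gives the inequality for `γ = ρ`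
(using `ρ ≤ 1`), and Chebyshev's `m₁ m₂ ≤ m₃` extends it to every `γ ≥ ρ`.
-/

open MeasureTheory ProbabilityTheory

namespace RidgeTuning

section Moments

variable {Ω : Type*} [MeasurableSpace Ω] {μ : Measure Ω} {W : Ω → ℝ}

lemma moment_restrict_setOf_ne_zero {k : ℕ} (hk : k ≠ 0) :
    moment W k (μ.restrict {ω | W ω ≠ 0}) = moment W k μ :=
  setIntegral_eq_integral_of_forall_compl_eq_zero fun ω hω => by
    simp [not_not.mp hω, hk]

section Finite

variable [IsFiniteMeasure μ] (hW : AEStronglyMeasurable W μ)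
  (h01 : ∀ᵐ ω ∂μ, W ω ∈ Set.Icc (0 : ℝ) 1)
include hW h01

lemma integrable_pow_of_ae_mem_Icc (k : ℕ) : Integrable (fun ω => W ω ^ k) μ :=
  .of_bound (hW.pow k) 1 <| h01.mono fun ω hω => by
    rw [Real.norm_eq_abs, abs_pow, abs_of_nonneg hω.1]
    exact pow_le_one₀ hω.1 hω.2

lemma integral_cubic (a₀ a₁ a₂ a₃ : ℝ) :
    ∫ ω, (a₀ + a₁ * W ω + a₂ * W ω ^ 2 + a₃ * W ω ^ 3) ∂μ =
      a₀ * μ.real Set.univ + a₁ * moment W 1 μ + a₂ * moment W 2 μ + a₃ * moment W 3 μ := by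
  have hi := integrable_pow_of_ae_mem_Icc hW h01
  have h1 : Integrable W μ := by simpa using hi 1
  rw [integral_add _ ((hi 3).const_mul a₃), integral_add _ ((hi 2).const_mul a₂),
    integral_add (integrable_const a₀) (h1.const_mul a₁)]
  · simp [moment, integral_const_mul, mul_comm]
  · exact (integrable_const a₀).add (h1.const_mul a₁)
  · exact ((integrable_const a₀).add (h1.const_mul a₁)).add ((hi 2).const_mul a₂)

lemma cubic_moment_nonneg {a₀ a₁ a₂ a₃ : ℝ}
    (h : ∀ x ∈ Set.Icc (0 : ℝ) 1, 0 ≤ a₀ + a₁ * x + a₂ * x ^ 2 + a₃ * x ^ 3) :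
    0 ≤ a₀ * μ.real Set.univ + a₁ * moment W 1 μ + a₂ * moment W 2 μ + a₃ * moment W 3 μ :=
  integral_cubic hW h01 a₀ a₁ a₂ a₃ ▸ integral_nonneg_of_ae (h01.mono fun _ hω => h _ hω)

lemma moment_one_mem_Icc : moment W 1 μ ∈ Set.Icc 0 (μ.real Set.univ) := by
  have h0 := cubic_moment_nonneg (a₀ := 0) (a₁ := 1) (a₂ := 0) (a₃ := 0) hW h01
    fun x hx => by linarith [hx.1]
  have h1 := cubic_moment_nonneg (a₀ := 1) (a₁ := -1) (a₂ := 0) (a₃ := 0) hW h01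
    fun x hx => by linarith [hx.2]
  constructor <;> linarith

lemma moment_ineq_of_measureReal_univ_le_one (hμ : μ.real Set.univ ≤ 1) :
    (moment W 1 μ - moment W 2 μ) * (moment W 2 μ - moment W 1 μ ^ 2) ≤
      (μ.real Set.univ - moment W 1 μ) * (moment W 3 μ - moment W 1 μ * moment W 2 μ) := by
  set ρ := μ.real Set.univ
  set m := moment W 1 μ
  set q := moment W 2 μ
  set c := moment W 3 μ
  rcases (measureReal_nonneg : 0 ≤ ρ).eq_or_lt with hρ | hρ
  · have hμ0 : μ = 0 := Measure.measure_univ_eq_zero.mp <|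
      (measureReal_eq_zero_iff (measure_ne_top μ _)).mp hρ.symm
    simp [m, q, c, hμ0]
  obtain ⟨hm, hmρ⟩ := moment_one_mem_Icc hW h01
  have hβ : 0 ≤ ρ * q - m ^ 2 := by
    have := cubic_moment_nonneg (a₀ := m ^ 2) (a₁ := -2 * ρ * m) (a₂ := ρ ^ 2) (a₃ := 0) hW h01
      fun x _ => (sq_nonneg (ρ * x - m)).trans_eq (by ring)
    exact nonneg_of_mul_nonneg_right (by linarith) hρ
  set α := ρ * (ρ - m)
  set β := ρ * q - m ^ 2
  have hα : 0 ≤ α := mul_nonneg hρ.le (sub_nonneg.mpr hmρ)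
  have hD : 0 ≤ (ρ - m) * (ρ * c - m * q) - (m - q) * β := by
    have := cubic_moment_nonneg (a₀ := m ^ 2 * β) (a₁ := m ^ 2 * α - 2 * ρ * m * β)
      (a₂ := ρ ^ 2 * β - 2 * ρ * m * α) (a₃ := ρ ^ 2 * α) hW h01
      fun x hx => (mul_nonneg (sq_nonneg (ρ * x - m))
        (add_nonneg (mul_nonneg hα hx.1) hβ)).trans_eq (by ring)
    have e : m ^ 2 * β * ρ + (m ^ 2 * α - 2 * ρ * m * β) * m + (ρ ^ 2 * β - 2 * ρ * m * α) * q
        + ρ ^ 2 * α * c = ρ ^ 2 * ((ρ - m) * (ρ * c - m * q) - (m - q) * β) := by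
      simp only [α, β]; ring
    rw [e] at this
    exact nonneg_of_mul_nonneg_right this (pow_pos hρ 2)
  have e : ρ * ((ρ - m) * (c - m * q) - (m - q) * (q - m ^ 2))
      = ((ρ - m) * (ρ * c - m * q) - (m - q) * β) + (1 - ρ) * m * β := by
    simp only [β]; ring
  have : 0 ≤ ρ * ((ρ - m) * (c - m * q) - (m - q) * (q - m ^ 2)) := by
    rw [e]; have := mul_nonneg (mul_nonneg (sub_nonneg.mpr hμ) hm) hβ; linarith
  exact sub_nonneg.mp (nonneg_of_mul_nonneg_right this hρ)

end Finite

section Probability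

variable [IsProbabilityMeasure μ] (hW : AEStronglyMeasurable W μ)
  (h01 : ∀ᵐ ω ∂μ, W ω ∈ Set.Icc (0 : ℝ) 1)
include hW h01

lemma integral_one_sub : ∫ ω, (1 - W ω) ∂μ = 1 - moment W 1 μ := by
  have h := integral_cubic hW h01 1 (-1) 0 0
  simp only [probReal_univ] at h
  calc ∫ ω, (1 - W ω) ∂μ = ∫ ω, (1 + -1 * W ω + 0 * W ω ^ 2 + 0 * W ω ^ 3) ∂μ := by
        congr 1 with ω; ring
    _ = 1 - moment W 1 μ := by rw [h]; ring

lemma integral_one_sub_sq : ∫ ω, (1 - W ω) ^ 2 ∂μ = 1 - 2 * moment W 1 μ + moment W 2 μ := by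
  have h := integral_cubic hW h01 1 (-2) 1 0
  simp only [probReal_univ] at h
  calc ∫ ω, (1 - W ω) ^ 2 ∂μ = ∫ ω, (1 + -2 * W ω + 1 * W ω ^ 2 + 0 * W ω ^ 3) ∂μ := by
        congr 1 with ω; ring
    _ = 1 - 2 * moment W 1 μ + moment W 2 μ := by rw [h]; ring

lemma moment_one_mul_moment_two_le_moment_three :
    moment W 1 μ * moment W 2 μ ≤ moment W 3 μ := by
  set m := moment W 1 μ
  have hm := (moment_one_mem_Icc hW h01).1
  have := cubic_moment_nonneg (a₀ := m ^ 3) (a₁ := -m ^ 2) (a₂ := -m) (a₃ := 1) hW h01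
    fun x hx => (mul_nonneg (sq_nonneg (x - m)) (add_nonneg hx.1 hm)).trans_eq (by ring)
  simp only [probReal_univ] at this
  linarith

theorem moment_ineq {γ : ℝ} (hγ : μ.real {ω | W ω ≠ 0} ≤ γ) :
    (moment W 1 μ - moment W 2 μ) * (moment W 2 μ - moment W 1 μ ^ 2) ≤
      (γ - moment W 1 μ) * (moment W 3 μ - moment W 1 μ * moment W 2 μ) := by
  have hρ := moment_ineq_of_measureReal_univ_le_one (μ := μ.restrict {ω | W ω ≠ 0})
    hW.restrict (ae_restrict_of_ae h01)
    (by rw [measureReal_restrict_apply_univ]; exact measureReal_le_one)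
  simp only [moment_restrict_setOf_ne_zero one_ne_zero, moment_restrict_setOf_ne_zero two_ne_zero,
    moment_restrict_setOf_ne_zero three_ne_zero, measureReal_restrict_apply_univ] at hρ
  have hcov := moment_one_mul_moment_two_le_moment_three hW h01
  linarith [mul_nonneg (sub_nonneg.mpr hγ) (sub_nonneg.mpr hcov)]

end Probability

end Moments

lemma div_add_mem_Icc {x y : ℝ} (hx : 0 ≤ x) (hy : 0 < y) : x / (x + y) ∈ Set.Icc (0 : ℝ) 1 :=
  ⟨by positivity, div_le_one_of_le₀ (by linarith) (by positivity)⟩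

lemma eq_of_div_add_eq_div_add {x y l : ℝ} (hx : 0 ≤ x) (hy : 0 ≤ y) (hl : 0 < l)
    (h : x / (x + l) = y / (y + l)) : x = y := by
  rw [div_eq_div_iff (by positivity) (by positivity)] at h
  have : (x - y) * l = 0 := by linear_combination h
  exact sub_eq_zero.mp ((mul_eq_zero.mp this).resolve_right hl.ne')

lemma sub_pow_succ_mem_Icc {u : ℝ} (hu : u ∈ Set.Icc (0 : ℝ) 1) (n : ℕ) :
    u ^ n - u ^ (n + 1) ∈ Set.Icc (0 : ℝ) 1 := by
  have h1 : u ^ (n + 1) ≤ u ^ n := pow_le_pow_of_le_one hu.1 hu.2 n.le_succ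
  exact ⟨sub_nonneg.mpr h1, by linarith [pow_le_one₀ (n := n) hu.1 hu.2, pow_nonneg hu.1 (n + 1)]⟩

lemma hasDerivAt_div_add {x y : ℝ} (hxy : x + y ≠ 0) (hy : y ≠ 0) :
    HasDerivAt (fun z => x / (x + z)) (-(x / (x + y) - (x / (x + y)) ^ 2) / y) y :=
  ((hasDerivAt_const y x).div ((hasDerivAt_id' y).const_add x) hxy).congr_deriv <| by
    field_simp
    ring

lemma hasDerivAt_div_add_pow (n : ℕ) {x y : ℝ} (hxy : x + y ≠ 0) (hy : y ≠ 0) :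
    HasDerivAt (fun z => (x / (x + z)) ^ n)
      (-(n * ((x / (x + y)) ^ n - (x / (x + y)) ^ (n + 1))) / y) y :=
  ((hasDerivAt_div_add hxy hy).pow n).congr_deriv <| by
    rcases n with _ | n
    · simp
    · simp only [Nat.add_sub_cancel]
      ring

lemma hasDerivAt_sub_div_mul_sqrt {γ x c : ℝ} {m q : ℝ → ℝ} (hx : 0 < x)
    (hm : HasDerivAt m (-(m x - q x) / x) x) (hq : HasDerivAt q (-(2 * (q x - c)) / x) x)
    (hV : 0 < q x - m x ^ 2) :
    HasDerivAt (fun y => (γ - m y) / (y * √(q y - m y ^ 2)))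
      (((m x - q x) * (q x - m x ^ 2) - (γ - m x) * (c - m x * q x)) /
        (x ^ 2 * (q x - m x ^ 2) * √(q x - m x ^ 2))) x := by
  have hs := Real.sqrt_pos.mpr hV
  have h := (hm.const_sub γ).div ((hasDerivAt_id' x).mul ((hq.sub (hm.pow 2)).sqrt hV.ne'))
    (mul_pos hx hs).ne'
  refine h.congr_deriv ?_
  simp only [Pi.mul_apply, Pi.sub_apply, Pi.pow_apply, Nat.cast_ofNat]
  field_simp
  rw [Real.sq_sqrt hV.le]
  ring

lemma antitoneOn_sub_div_mul_sqrt {γ : ℝ} {m q c : ℝ → ℝ}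
    (hm : ∀ x > 0, HasDerivAt m (-(m x - q x) / x) x)
    (hq : ∀ x > 0, HasDerivAt q (-(2 * (q x - c x)) / x) x)
    (hV : ∀ x > 0, 0 < q x - m x ^ 2)
    (hkey : ∀ x > 0, (m x - q x) * (q x - m x ^ 2) ≤ (γ - m x) * (c x - m x * q x)) :
    AntitoneOn (fun x => (γ - m x) / (x * √(q x - m x ^ 2))) (Set.Ioi 0) := by
  have hd (x : ℝ) (hx : 0 < x) :=
    hasDerivAt_sub_div_mul_sqrt (γ := γ) hx (hm x hx) (hq x hx) (hV x hx)
  refine antitoneOn_of_hasDerivWithinAt_nonpos (convex_Ioi 0) (f' := fun x =>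
      ((m x - q x) * (q x - m x ^ 2) - (γ - m x) * (c x - m x * q x)) /
        (x ^ 2 * (q x - m x ^ 2) * √(q x - m x ^ 2)))
    (fun x hx => (hd x hx).continuousAt.continuousWithinAt) (fun x hx => ?_) (fun x hx => ?_)
  · rw [interior_Ioi] at hx ⊢
    exact (hd x hx).hasDerivWithinAt
  · rw [interior_Ioi] at hx
    have := hV x hx
    exact div_nonpos_of_nonpos_of_nonneg (sub_nonpos.mpr (hkey x hx)) (by positivity)

section Ridge

variable {Ω : Type*} [MeasurableSpace Ω] {P : Measure Ω} {X : Ω → ℝ}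

noncomputable def ridgeMoment (P : Measure Ω) (X : Ω → ℝ) (n : ℕ) (l : ℝ) : ℝ :=
  moment (fun ω => X ω / (X ω + l)) n P

lemma hasDerivAt_ridgeMoment [IsFiniteMeasure P] (hX : Measurable X) (hnn : ∀ᵐ ω ∂P, 0 ≤ X ω)
    (n : ℕ) {l : ℝ} (hl : 0 < l) :
    HasDerivAt (ridgeMoment P X n)
      (-(n * (ridgeMoment P X n l - ridgeMoment P X (n + 1) l)) / l) l := by
  set U : ℝ → Ω → ℝ := fun y ω => X ω / (X ω + y)
  have hU : ∀ y, Measurable (U y) := fun y => hX.div (hX.add_const y)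
  have hU01 : ∀ᵐ ω ∂P, ∀ y > 0, U y ω ∈ Set.Icc (0 : ℝ) 1 := by
    filter_upwards [hnn] with ω hω y hy using div_add_mem_Icc hω hy
  have hint (k : ℕ) : Integrable (fun ω => U l ω ^ k) P :=
    integrable_pow_of_ae_mem_Icc (hU l).aestronglyMeasurable (hU01.mono fun _ hω => hω l hl) k
  have hderiv := hasDerivAt_integral_of_dominated_loc_of_deriv_le (μ := P)
    (F := fun y ω => U y ω ^ n) (F' := fun y ω => -(n * (U y ω ^ n - U y ω ^ (n + 1))) / y)
    (bound := fun _ => 2 * n / l) (Ioi_mem_nhds (half_lt_self hl))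
    (.of_forall fun y => ((hU y).pow_const n).aestronglyMeasurable) (hint n)
    (by have := hU l; fun_prop)
    (hU01.mono fun ω hω y (hy : l / 2 < y) => by
      have hy0 : 0 < y := by linarith
      obtain ⟨h0, h1⟩ := sub_pow_succ_mem_Icc (hω y hy0) n
      calc ‖-(n * (U y ω ^ n - U y ω ^ (n + 1))) / y‖
          = n * (U y ω ^ n - U y ω ^ (n + 1)) / y := by
            rw [norm_div, norm_neg, Real.norm_of_nonneg (by positivity),
              Real.norm_of_nonneg hy0.le]
        _ ≤ n * 1 / (l / 2) := by gcongr
        _ = 2 * n / l := by ring)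
    (integrable_const _)
    (by
      filter_upwards [hnn] with ω hω y (hy : l / 2 < y)
      exact hasDerivAt_div_add_pow n (by linarith) (by linarith))
  refine HasDerivAt.congr_deriv (f := ridgeMoment P X n) hderiv.2 ?_
  rw [integral_div, integral_neg, integral_const_mul, integral_sub (hint n) (hint (n + 1))]
  rfl

variable [IsProbabilityMeasure P]

lemma integral_div_add_eq_ridgeMoment (hX : Measurable X) (hnn : ∀ᵐ ω ∂P, 0 ≤ X ω) {l : ℝ}
    (hl : 0 < l) :
    ∫ ω, l / (X ω + l) ∂P = 1 - ridgeMoment P X 1 l ∧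
      ∫ ω, (l / (X ω + l)) ^ 2 ∂P = 1 - 2 * ridgeMoment P X 1 l + ridgeMoment P X 2 l := by
  have hW := (hX.div (hX.add_const l)).aestronglyMeasurable (μ := P)
  have h01 := hnn.mono fun ω hω => div_add_mem_Icc hω hl
  have hcompl : ∀ᵐ ω ∂P, l / (X ω + l) = 1 - X ω / (X ω + l) := hnn.mono fun ω hω => by
    rw [one_sub_div (by positivity), add_sub_cancel_left]
  exact ⟨(integral_congr_ae hcompl).trans (integral_one_sub hW h01),
    (integral_congr_ae (hcompl.mono fun ω h => by rw [h])).trans (integral_one_sub_sq hW h01)⟩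

lemma sq_ridgeMoment_one_lt_ridgeMoment_two (hX : Measurable X) (hnn : ∀ᵐ ω ∂P, 0 ≤ X ω)
    (hnc : ¬ ∃ c : ℝ, ∀ᵐ ω ∂P, X ω = c) {l : ℝ} (hl : 0 < l) :
    ridgeMoment P X 1 l ^ 2 < ridgeMoment P X 2 l := by
  set U : Ω → ℝ := fun ω => X ω / (X ω + l)
  have hU : MemLp U 2 P := memLp_of_bounded (hnn.mono fun ω hω => div_add_mem_Icc hω hl)
    (hX.div (hX.add_const l)).aestronglyMeasurable 2
  have hvar : variance U P = ridgeMoment P X 2 l - ridgeMoment P X 1 l ^ 2 := by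
    rw [variance_eq_sub hU]
    simp [ridgeMoment, moment, U]
  rw [← sub_pos, ← hvar]
  refine (variance_nonneg U P).lt_of_ne' fun h0 => hnc ?_
  have hconst := ae_eq_integral_of_variance_eq_zero hU h0
  obtain ⟨ω₀, hω₀, hX₀⟩ := (hconst.and hnn).exists
  refine ⟨X ω₀, ?_⟩
  filter_upwards [hconst, hnn] with ω hω hXω
  exact eq_of_div_add_eq_div_add hXω hX₀ hl (hω.trans hω₀.symm)

lemma measureReal_ne_zero_le {γ : ℝ} (hX : Measurable X)
    (hcase : 1 ≤ γ ∨ ENNReal.ofReal (1 - γ) ≤ P {ω | X ω = 0}) :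
    P.real {ω | X ω ≠ 0} ≤ γ := by
  rcases hcase with hγ | hγ
  · exact measureReal_le_one.trans hγ
  · have h0 : 1 - γ ≤ P.real {ω | X ω = 0} :=
      (ENNReal.ofReal_le_iff_le_toReal (measure_ne_top P _)).mp hγ
    have hc := probReal_compl_eq_one_sub (μ := P)
      (measurableSet_eq_fun hX (measurable_const (a := 0)))
    rw [Set.compl_ofPred] at hc
    linarith

lemma ridgeMoment_ineq {γ : ℝ} (hX : Measurable X) (hnn : ∀ᵐ ω ∂P, 0 ≤ X ω)
    (hγ : P.real {ω | X ω ≠ 0} ≤ γ) {l : ℝ} (hl : 0 < l) :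
    (ridgeMoment P X 1 l - ridgeMoment P X 2 l) *
        (ridgeMoment P X 2 l - ridgeMoment P X 1 l ^ 2) ≤
      (γ - ridgeMoment P X 1 l) *
        (ridgeMoment P X 3 l - ridgeMoment P X 1 l * ridgeMoment P X 2 l) :=
  moment_ineq (hX.div (hX.add_const l)).aestronglyMeasurable
    (hnn.mono fun ω hω => div_add_mem_Icc hω hl) <|
    (measureReal_mono (Set.ofPred_subset_ofPred.mpr fun ω hω h0 => hω (by simp [h0]))).trans hγ

end Ridge

end RidgeTuning

open RidgeTuning in
theorem stmt_15_general {Ω : Type*} [MeasurableSpace Ω] (P : Measure Ω) [IsProbabilityMeasure P]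
    (γ : ℝ)
    (X : Ω → ℝ) (hX : Measurable X) (hnn : ∀ᵐ ω ∂P, 0 ≤ X ω)
    (hnc : ¬ ∃ c : ℝ, ∀ᵐ ω ∂P, X ω = c)
    (hcase : 1 ≤ γ ∨ ENNReal.ofReal (1 - γ) ≤ P {ω | X ω = 0})
    (β₁ β₂ : ℝ → ℝ)
    (h1 : ∀ lam : ℝ, β₁ lam = ∫ ω, lam / (X ω + lam) ∂P)
    (h2 : ∀ lam : ℝ, β₂ lam = ∫ ω, (lam / (X ω + lam)) ^ 2 ∂P) :
    AntitoneOn (fun lam => (β₁ lam - (1 - γ)) /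
      (lam * Real.sqrt (β₂ lam - (β₁ lam) ^ 2))) (Set.Ioi (0 : ℝ)) := by
  refine (antitoneOn_sub_div_mul_sqrt (γ := γ) (m := ridgeMoment P X 1) (q := ridgeMoment P X 2)
    (c := ridgeMoment P X 3) (fun l hl => ?_) (fun l hl => ?_)
    (fun l hl => sub_pos.mpr (sq_ridgeMoment_one_lt_ridgeMoment_two hX hnn hnc hl))
    (fun l hl => ridgeMoment_ineq hX hnn (measureReal_ne_zero_le hX hcase) hl)).congr
    fun l (hl : 0 < l) => ?_
  · simpa using hasDerivAt_ridgeMoment hX hnn 1 hl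
  · simpa using hasDerivAt_ridgeMoment hX hnn 2 hl
  · obtain ⟨hβ₁, hβ₂⟩ := integral_div_add_eq_ridgeMoment hX hnn hl
    simp only [h1, h2, hβ₁, hβ₂]
    ring_nf

/-- Let `γ > 0` and let `X` be a nonnegative, not a.s. constant random
variable with either `γ ≥ 1` or `P(X = 0) ≥ 1 - γ`. With `β₁(λ) = E[λ/(X+λ)]` and
`β₂(λ) = E[(λ/(X+λ))²]`, the function
`λ ↦ (β₁(λ) - (1-γ))/(λ√(β₂(λ) - β₁(λ)²))` is nonincreasing on `(0,∞)`. -/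
theorem stmt_15 {Ω : Type*} [MeasurableSpace Ω] (P : Measure Ω) [IsProbabilityMeasure P]
    (γ : ℝ) (hγ : 0 < γ)
    (X : Ω → ℝ) (hX : Measurable X) (hnn : ∀ᵐ ω ∂P, 0 ≤ X ω)
    (hnc : ¬ ∃ c : ℝ, ∀ᵐ ω ∂P, X ω = c)
    (hcase : 1 ≤ γ ∨ ENNReal.ofReal (1 - γ) ≤ P {ω | X ω = 0})
    (β₁ β₂ : ℝ → ℝ)
    (h1 : ∀ lam : ℝ, β₁ lam = ∫ ω, lam / (X ω + lam) ∂P)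
    (h2 : ∀ lam : ℝ, β₂ lam = ∫ ω, (lam / (X ω + lam)) ^ 2 ∂P) :
    AntitoneOn (fun lam => (β₁ lam - (1 - γ)) /
      (lam * Real.sqrt (β₂ lam - (β₁ lam) ^ 2))) (Set.Ioi (0 : ℝ)) :=
  stmt_15_general P γ X hX hnn hnc hcase β₁ β₂ h1 h2
end

section
/- Fix ε ∈ (0, 1/3]. There exist a constant K > 0 and an integer N₀, both depending only on ε, such that for every n ≥ N₀ and all triples (t₁,t₂,t₃) and (m₁,m₂,m₃) in [0,1]³ satisfying t₂ − t₁ ≥ ε, t₃ − t₂ ≥ ε, m₂ − m₁ ≥ ε, m₃ − m₂ ≥ ε, one has |ũ_n(t₁,t₂,t₃)ᵀ ũ_n(m₁,m₂,m₃) − κ(t₁,t₂,t₃; m₁,m₂,m₃)| ≤ K/n. -/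
/-!
Round every breakpoint down to the grid: `s = ⌊n t⌋₊ / n = (k(t) - 1) / n`. The entries of `ũ_n(t)`
are `u(j/n; s) / √n`, and a step function with breakpoints on the grid is constant on each cell
`[j/n, (j+1)/n)`, so the Riemann sum `ũ_n(t)ᵀ ũ_n(m)` equals `κ(s; r)` exactly. Writing `u` as a
difference of normalized indicators expresses `κ` through overlap lengths `|I ∩ J| / (|I| |J|)`,
which on triples with gaps at least `ε/2` is Lipschitz in the breakpoints with a constant depending
only on `ε`; rounding moves each breakpoint by less than `1/n`.
-/

open BigOperators

/-- `k(t) = ⌊nt⌋ + 1`. -/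
noncomputable def kIdx (n : ℕ) (t : ℝ) : ℕ := ⌊(n : ℝ) * t⌋₊ + 1

/-- The step function `u(x; t₁,t₂,t₃)` equal to `-1/(t₂-t₁)` on `[t₁,t₂)`,
`1/(t₃-t₂)` on `[t₂,t₃)` and `0` otherwise. -/
noncomputable def uStep (t₁ t₂ t₃ x : ℝ) : ℝ :=
  if t₁ ≤ x ∧ x < t₂ then -1 / (t₂ - t₁)
  else if t₂ ≤ x ∧ x < t₃ then 1 / (t₃ - t₂)
  else 0

/-- `κ(t₁,t₂,t₃; m₁,m₂,m₃) = ∫₀¹ u(x;t) u(x;m) dx`. -/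
noncomputable def kappa (t₁ t₂ t₃ m₁ m₂ m₃ : ℝ) : ℝ :=
  ∫ x in (0 : ℝ)..1, uStep t₁ t₂ t₃ x * uStep m₁ m₂ m₃ x

/-- The discrete contrast vector `ũ_n(t₁,t₂,t₃) ∈ ℝⁿ`: its `j`-th entry (1-indexed)
equals `-√n/(k(t₂)-k(t₁))` if `k(t₁) ≤ j < k(t₂)`, `√n/(k(t₃)-k(t₂))` if
`k(t₂) ≤ j < k(t₃)`, and `0` otherwise. -/
noncomputable def uVec (n : ℕ) (t₁ t₂ t₃ : ℝ) : Fin n → ℝ := fun j =>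
  if kIdx n t₁ ≤ (j : ℕ) + 1 ∧ (j : ℕ) + 1 < kIdx n t₂ then
    -Real.sqrt n / ((kIdx n t₂ : ℝ) - (kIdx n t₁ : ℝ))
  else if kIdx n t₂ ≤ (j : ℕ) + 1 ∧ (j : ℕ) + 1 < kIdx n t₃ then
    Real.sqrt n / ((kIdx n t₃ : ℝ) - (kIdx n t₂ : ℝ))
  else 0

open MeasureTheory

noncomputable def gridRound (n : ℕ) (t : ℝ) : ℝ := ⌊(n : ℝ) * t⌋₊ / n

section GridRound

variable {n : ℕ}

theorem gridRound_eq_of_mem_Ioo (hn : 0 < n) {j : ℕ} {x : ℝ}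
    (hx : x ∈ Set.Ioo ((j : ℝ) / n) ((j + 1) / n)) : gridRound n x = j / n := by
  have hn' : (0 : ℝ) < n := by exact_mod_cast hn
  obtain ⟨h₁, h₂⟩ := hx
  have hx₀ : 0 ≤ x := (by positivity : (0 : ℝ) ≤ j / n).trans h₁.le
  rw [div_lt_iff₀ hn'] at h₁
  rw [lt_div_iff₀ hn'] at h₂
  rw [gridRound, Nat.floor_eq_iff (by positivity) |>.2 ⟨by linarith, by linarith⟩]

theorem sum_div_eq_integral_gridRound (g : ℝ → ℝ) (hn : 0 < n) :
    ∑ j ∈ Finset.range n, g (j / n) / n = ∫ x in (0 : ℝ)..1, g (gridRound n x) := by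
  have hn' : (0 : ℝ) < n := by exact_mod_cast hn
  have hcell : ∀ j : ℕ, Set.EqOn (fun x => g (gridRound n x)) (fun _ => g (j / n))
      (Set.Ioo ((j : ℝ) / n) ((j + 1) / n)) := fun j x hx => by
    simp only [gridRound_eq_of_mem_Ioo hn hx]
  have hle : ∀ j : ℕ, (j : ℝ) / n ≤ (j + 1) / n := fun j => by gcongr; linarith
  have hint : ∀ j < n, IntervalIntegrable (fun x => g (gridRound n x)) volume
      ((j : ℕ) / n : ℝ) (((j + 1 : ℕ) : ℝ) / n) := fun j _ => by
    refine (intervalIntegrable_const (c := g (j / n))).congr_uIoo ?_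
    rw [Set.uIoo_of_le (by exact_mod_cast hle j)]
    push_cast
    exact (hcell j).symm
  have hsplit :=
    intervalIntegral.sum_integral_adjacent_intervals (a := fun j : ℕ => (j : ℝ) / n) hint
  simp only [Nat.cast_zero, zero_div, div_self hn'.ne'] at hsplit
  rw [← hsplit]
  refine Finset.sum_congr rfl fun j _ => ?_
  rw [intervalIntegral.integral_congr_Ioo_of_le (by exact_mod_cast hle j)
    (by push_cast; exact hcell j)]
  simp only [intervalIntegral.integral_const, smul_eq_mul]
  push_cast
  field_simp
  ring

theorem gridRound_nonneg (t : ℝ) : 0 ≤ gridRound n t := by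
  unfold gridRound; positivity

theorem gridRound_le {t : ℝ} (ht : 0 ≤ t) : gridRound n t ≤ t :=
  div_le_of_le_mul₀ (Nat.cast_nonneg n) ht <| by
    rw [mul_comm]; exact Nat.floor_le (by positivity)

theorem sub_one_div_lt_gridRound (hn : 0 < n) (t : ℝ) : t - 1 / n < gridRound n t := by
  have hn' : (0 : ℝ) < n := by exact_mod_cast hn
  rw [gridRound, sub_lt_iff_lt_add, ← add_div, lt_div_iff₀' hn']
  exact Nat.lt_floor_add_one _

theorem gridRound_le_one (hn : 0 < n) {t : ℝ} (ht : t ≤ 1) : gridRound n t ≤ 1 := by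
  have hn' : (0 : ℝ) < n := by exact_mod_cast hn
  rw [gridRound, div_le_one hn']
  exact_mod_cast Nat.floor_le_of_le (by nlinarith)

theorem abs_gridRound_sub_le (hn : 0 < n) {t : ℝ} (ht : 0 ≤ t) : |gridRound n t - t| ≤ 1 / n := by
  rw [abs_sub_comm, abs_of_nonneg (sub_nonneg.2 (gridRound_le ht))]
  linarith [sub_one_div_lt_gridRound hn t]

theorem gridRound_le_natCast_div_iff (hn : 0 < n) (t : ℝ) (j : ℕ) :
    gridRound n t ≤ j / n ↔ ⌊(n : ℝ) * t⌋₊ ≤ j := by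
  rw [gridRound, div_le_div_iff_of_pos_right (by exact_mod_cast hn), Nat.cast_le]

theorem natCast_div_lt_gridRound_iff (hn : 0 < n) (t : ℝ) (j : ℕ) :
    j / n < gridRound n t ↔ j < ⌊(n : ℝ) * t⌋₊ := by
  rw [gridRound, div_lt_div_iff_of_pos_right (by exact_mod_cast hn), Nat.cast_lt]

theorem gridRound_le_gridRound_iff_le (hn : 0 < n) (t : ℝ) {x : ℝ} (hx : 0 ≤ x) :
    gridRound n t ≤ gridRound n x ↔ gridRound n t ≤ x := by
  have hn' : (0 : ℝ) < n := by exact_mod_cast hn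
  unfold gridRound
  rw [div_le_div_iff_of_pos_right hn', Nat.cast_le, Nat.le_floor_iff (by positivity),
    div_le_iff₀' hn']

theorem gridRound_lt_gridRound_iff_lt (hn : 0 < n) (t : ℝ) {x : ℝ} (hx : 0 ≤ x) :
    gridRound n x < gridRound n t ↔ x < gridRound n t := by
  have hn' : (0 : ℝ) < n := by exact_mod_cast hn
  unfold gridRound
  rw [div_lt_div_iff_of_pos_right hn', Nat.cast_lt, Nat.floor_lt (by positivity), lt_div_iff₀' hn']

theorem uStep_gridRound (hn : 0 < n) (t₁ t₂ t₃ : ℝ) {x : ℝ} (hx : 0 ≤ x) :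
    uStep (gridRound n t₁) (gridRound n t₂) (gridRound n t₃) (gridRound n x) =
      uStep (gridRound n t₁) (gridRound n t₂) (gridRound n t₃) x := by
  simp only [uStep, gridRound_le_gridRound_iff_le hn _ hx, gridRound_lt_gridRound_iff_lt hn _ hx]

theorem uVec_eq_uStep_gridRound (t₁ t₂ t₃ : ℝ) (j : Fin n) :
    uVec n t₁ t₂ t₃ j =
      uStep (gridRound n t₁) (gridRound n t₂) (gridRound n t₃) (j / n) / Real.sqrt n := by
  have hn : 0 < n := j.pos
  have hstep : ∀ t t' : ℝ, (kIdx n t' : ℝ) - kIdx n t = (gridRound n t' - gridRound n t) * n :=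
    fun t t' => by
      simp only [kIdx, gridRound]; push_cast
      field_simp
      ring
  have hsqrt : Real.sqrt n ≠ 0 := (Real.sqrt_pos.2 (by exact_mod_cast hn)).ne'
  have hval : ∀ D : ℝ, Real.sqrt n / (D * n) = 1 / D / Real.sqrt n := fun D => calc
    _ = Real.sqrt n / (D * Real.sqrt n * Real.sqrt n) := by
      rw [mul_assoc, Real.mul_self_sqrt (Nat.cast_nonneg n)]
    _ = 1 / D / Real.sqrt n := by rw [div_mul_cancel_right₀ hsqrt, div_div, one_div]
  have hle : ∀ t, kIdx n t ≤ j + 1 ↔ gridRound n t ≤ j / n := fun t => by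
    rw [gridRound_le_natCast_div_iff hn, kIdx]; omega
  have hlt : ∀ t, j + 1 < kIdx n t ↔ j / n < gridRound n t := fun t => by
    rw [natCast_div_lt_gridRound_iff hn, kIdx]; omega
  simp only [uVec, uStep, hle, hlt, hstep, hval, neg_div]
  split_ifs <;> ring

theorem sum_uVec_mul_uVec_eq_kappa_gridRound (hn : 0 < n) (t₁ t₂ t₃ m₁ m₂ m₃ : ℝ) :
    ∑ j, uVec n t₁ t₂ t₃ j * uVec n m₁ m₂ m₃ j =
      kappa (gridRound n t₁) (gridRound n t₂) (gridRound n t₃)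
        (gridRound n m₁) (gridRound n m₂) (gridRound n m₃) := by
  set g : ℝ → ℝ := fun x => uStep (gridRound n t₁) (gridRound n t₂) (gridRound n t₃) x *
    uStep (gridRound n m₁) (gridRound n m₂) (gridRound n m₃) x
  have hsq : Real.sqrt n * Real.sqrt n = n := Real.mul_self_sqrt (Nat.cast_nonneg n)
  calc ∑ j, uVec n t₁ t₂ t₃ j * uVec n m₁ m₂ m₃ j = ∑ j : Fin n, g (j / n) / n := by
        refine Finset.sum_congr rfl fun j _ => ?_
        rw [uVec_eq_uStep_gridRound, uVec_eq_uStep_gridRound, div_mul_div_comm, hsq]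
    _ = ∫ x in (0 : ℝ)..1, g (gridRound n x) := by
        rw [Fin.sum_univ_eq_sum_range (fun j => g (j / n) / n), sum_div_eq_integral_gridRound g hn]
    _ = _ := by
        refine intervalIntegral.integral_congr fun x hx => ?_
        have hx₀ : 0 ≤ x := (Set.uIcc_of_le (zero_le_one (α := ℝ)) ▸ hx).1
        simp only [g, uStep_gridRound hn _ _ _ hx₀]

end GridRound

def IsSeparatedTriple (η a b c : ℝ) : Prop := 0 ≤ a ∧ η ≤ b - a ∧ η ≤ c - b ∧ c ≤ 1

theorem IsSeparatedTriple.mono {η η' a b c : ℝ} (h : IsSeparatedTriple η a b c) (hη : η' ≤ η) :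
    IsSeparatedTriple η' a b c :=
  ⟨h.1, hη.trans h.2.1, hη.trans h.2.2.1, h.2.2.2⟩

theorem IsSeparatedTriple.gridRound {n : ℕ} {η t₁ t₂ t₃ : ℝ} (hn : 0 < n) (hη : 0 ≤ η)
    (h : IsSeparatedTriple η t₁ t₂ t₃) :
    IsSeparatedTriple (η - 1 / n) (gridRound n t₁) (gridRound n t₂) (gridRound n t₃) := by
  obtain ⟨h₁, h₁₂, h₂₃, h₃⟩ := h
  refine ⟨gridRound_nonneg (n := n) t₁, ?_, ?_, gridRound_le_one hn h₃⟩
  · linarith [gridRound_le (n := n) h₁, sub_one_div_lt_gridRound hn t₂]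
  · linarith [gridRound_le (n := n) (by linarith : 0 ≤ t₂), sub_one_div_lt_gridRound hn t₃]

noncomputable def overlap (a b c d : ℝ) : ℝ := volume.real (Set.Ico a b ∩ Set.Ico c d)

theorem overlap_eq (a b c d : ℝ) : overlap a b c d = max (min b d - max a c) 0 := by
  rw [overlap, Set.Ico_inter_Ico, Real.volume_real_Ico]

noncomputable def normalizedIndicator (a b : ℝ) : ℝ → ℝ :=
  (Set.Ico a b).indicator fun _ => 1 / (b - a)

noncomputable def normalizedOverlap (a b c d : ℝ) : ℝ := overlap a b c d / ((b - a) * (d - c))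

noncomputable def contrastPairing (a b c d e f : ℝ) : ℝ :=
  normalizedOverlap a b d e - normalizedOverlap a b e f - normalizedOverlap b c d e +
    normalizedOverlap b c e f

theorem uStep_eq_normalizedIndicator (t₁ t₂ t₃ : ℝ) :
    uStep t₁ t₂ t₃ = -normalizedIndicator t₁ t₂ + normalizedIndicator t₂ t₃ := by
  ext x
  simp only [uStep, normalizedIndicator, Pi.add_apply, Pi.neg_apply, Set.indicator_apply,
    Set.mem_Ico]
  split_ifs with h h' <;> first | linarith [h.2, h'.1] | ring

theorem normalizedIndicator_mul_normalizedIndicator (a b c d x : ℝ) :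
    normalizedIndicator a b x * normalizedIndicator c d x =
      (Set.Ico a b ∩ Set.Ico c d).indicator (fun _ => 1 / ((b - a) * (d - c))) x := by
  rw [normalizedIndicator, normalizedIndicator, ← Set.inter_indicator_mul, one_div_mul_one_div]

theorem integrable_normalizedIndicator_mul (a b c d : ℝ) :
    Integrable fun x => normalizedIndicator a b x * normalizedIndicator c d x := by
  simp only [normalizedIndicator_mul_normalizedIndicator]
  refine (integrable_indicator_iff (measurableSet_Ico.inter measurableSet_Ico)).2
    (integrableOn_const ?_)
  exact ((measure_mono Set.inter_subset_left).trans_lt measure_Ico_lt_top).ne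

theorem integral_normalizedIndicator_mul {a b : ℝ} (ha : 0 ≤ a) (hb : b ≤ 1) (c d : ℝ) :
    ∫ x in (0 : ℝ)..1, normalizedIndicator a b x * normalizedIndicator c d x =
      normalizedOverlap a b c d := by
  have hsub : Set.Ico a b ∩ Set.Ico c d ⊆ Set.Icc 0 1 := fun x hx =>
    ⟨ha.trans hx.1.1, hx.1.2.le.trans hb⟩
  simp only [normalizedIndicator_mul_normalizedIndicator]
  rw [intervalIntegral.integral_of_le zero_le_one, Measure.restrict_congr_set Ioc_ae_eq_Icc,
    integral_indicator_const _ (measurableSet_Ico.inter measurableSet_Ico),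
    measureReal_restrict_apply (measurableSet_Ico.inter measurableSet_Ico),
    Set.inter_eq_left.2 hsub, smul_eq_mul, normalizedOverlap, overlap]
  ring

theorem kappa_eq_contrastPairing {t₁ t₂ t₃ : ℝ} (ht : IsSeparatedTriple 0 t₁ t₂ t₃)
    (m₁ m₂ m₃ : ℝ) :
    kappa t₁ t₂ t₃ m₁ m₂ m₃ = contrastPairing t₁ t₂ t₃ m₁ m₂ m₃ := by
  obtain ⟨h₁, h₁₂, h₂₃, h₃⟩ := ht
  set φ := normalizedIndicator
  have hint : ∀ a b c d, IntervalIntegrable (fun x => φ a b x * φ c d x) volume 0 1 :=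
    fun a b c d => (integrable_normalizedIndicator_mul a b c d).intervalIntegrable
  have hexpand : ∀ x, uStep t₁ t₂ t₃ x * uStep m₁ m₂ m₃ x =
      φ t₁ t₂ x * φ m₁ m₂ x - φ t₁ t₂ x * φ m₂ m₃ x - φ t₂ t₃ x * φ m₁ m₂ x +
        φ t₂ t₃ x * φ m₂ m₃ x := fun x => by
    simp only [uStep_eq_normalizedIndicator, Pi.add_apply, Pi.neg_apply, φ]
    ring
  rw [kappa, intervalIntegral.integral_congr fun x _ => hexpand x,
    intervalIntegral.integral_add (((hint _ _ _ _).sub (hint _ _ _ _)).sub (hint _ _ _ _))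
      (hint _ _ _ _),
    intervalIntegral.integral_sub ((hint _ _ _ _).sub (hint _ _ _ _)) (hint _ _ _ _),
    intervalIntegral.integral_sub (hint _ _ _ _) (hint _ _ _ _),
    integral_normalizedIndicator_mul h₁ (by linarith),
    integral_normalizedIndicator_mul h₁ (by linarith),
    integral_normalizedIndicator_mul (by linarith) h₃,
    integral_normalizedIndicator_mul (by linarith) h₃, contrastPairing]

theorem overlap_nonneg (a b c d : ℝ) : 0 ≤ overlap a b c d := measureReal_nonneg

theorem overlap_le_sub {a b : ℝ} (hab : a ≤ b) (c d : ℝ) : overlap a b c d ≤ b - a := by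
  rw [overlap_eq]
  exact max_le (by linarith [min_le_left b d, le_max_left a c]) (by linarith)

theorem abs_overlap_sub_overlap_le (a b c d a' b' c' d' : ℝ) :
    |overlap a b c d - overlap a' b' c' d'| ≤ max |a - a'| |c - c'| + max |b - b'| |d - d'| := by
  rw [overlap_eq, overlap_eq]
  calc _ ≤ |(min b d - max a c) - (min b' d' - max a' c')| := abs_max_sub_max_le_abs _ _ _
    _ = |(min b d - min b' d') - (max a c - max a' c')| := by ring_nf
    _ ≤ |min b d - min b' d'| + |max a c - max a' c'| := abs_sub _ _
    _ ≤ max |b - b'| |d - d'| + max |a - a'| |c - c'| :=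
      add_le_add (abs_min_sub_min_le_max _ _ _ _) (abs_max_sub_max_le_max _ _ _ _)
    _ = _ := add_comm _ _

theorem abs_div_sub_div_le {x y x' y' η M : ℝ} (hη : 0 < η) (hy : η ≤ y) (hy' : η ≤ y')
    (hx' : |x'| ≤ M) : |x / y - x' / y'| ≤ |x - x'| / η + M * |y - y'| / η ^ 2 := by
  have hy₀ : 0 < y := hη.trans_le hy
  have hy₀' : 0 < y' := hη.trans_le hy'
  have hM : 0 ≤ M := (abs_nonneg _).trans hx'
  calc |x / y - x' / y'| = |(x - x') / y + x' * (y' - y) / (y * y')| := by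
        congr 1; field_simp; ring
    _ ≤ |x - x'| / y + |x'| * |y - y'| / (y * y') := by
        refine (abs_add_le _ _).trans_eq ?_
        rw [abs_div, abs_div, abs_mul, abs_of_pos hy₀, abs_of_pos (mul_pos hy₀ hy₀'),
          abs_sub_comm y']
    _ ≤ |x - x'| / η + M * |y - y'| / η ^ 2 := by
        gcongr
        rw [sq]; exact mul_le_mul hy hy' hη.le hy₀.le

theorem abs_mul_sub_mul_le {u v u' v' : ℝ} (hv : |v| ≤ 1) (hu' : |u'| ≤ 1) :
    |u * v - u' * v'| ≤ |u - u'| + |v - v'| := by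
  calc |u * v - u' * v'| = |(u - u') * v + u' * (v - v')| := by ring_nf
    _ ≤ |u - u'| * |v| + |u'| * |v - v'| := by
        rw [← abs_mul, ← abs_mul]; exact abs_add_le _ _
    _ ≤ |u - u'| * 1 + 1 * |v - v'| := by gcongr
    _ = |u - u'| + |v - v'| := by ring

theorem abs_sub_sub_sub_le {a b a' b' δ : ℝ} (ha : |a - a'| ≤ δ) (hb : |b - b'| ≤ δ) :
    |(b - a) - (b' - a')| ≤ 2 * δ := by
  rw [abs_le] at *
  constructor <;> linarith

theorem abs_normalizedOverlap_sub_le {η δ a b c d a' b' c' d' : ℝ} (hη : 0 < η)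
    (hab : η ≤ b - a) (hcd : η ≤ d - c) (hab' : η ≤ b' - a') (hcd' : η ≤ d' - c')
    (hcd₁ : d - c ≤ 1) (hab₁' : b' - a' ≤ 1)
    (ha : |a - a'| ≤ δ) (hb : |b - b'| ≤ δ) (hc : |c - c'| ≤ δ) (hd : |d - d'| ≤ δ) :
    |normalizedOverlap a b c d - normalizedOverlap a' b' c' d'| ≤ (2 / η ^ 2 + 4 / η ^ 4) * δ := by
  have hoverlap : |overlap a b c d - overlap a' b' c' d'| ≤ 2 * δ :=
    (abs_overlap_sub_overlap_le _ _ _ _ _ _ _ _).trans (by linarith [max_le ha hc, max_le hb hd])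
  have hoverlap' : |overlap a' b' c' d'| ≤ 1 := by
    rw [abs_of_nonneg (overlap_nonneg _ _ _ _)]
    linarith [overlap_le_sub (by linarith : a' ≤ b') c' d']
  have harea : ∀ {u v : ℝ}, η ≤ u → η ≤ v → η ^ 2 ≤ u * v := fun hu hv => by
    rw [sq]; exact mul_le_mul hu hv hη.le (hη.le.trans hu)
  have hdiff : |(b - a) * (d - c) - (b' - a') * (d' - c')| ≤ 4 * δ := by
    refine (abs_mul_sub_mul_le ?_ ?_).trans ?_
    · rw [abs_of_nonneg (by linarith)]; exact hcd₁
    · rw [abs_of_nonneg (by linarith)]; exact hab₁'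
    · linarith [abs_sub_sub_sub_le ha hb, abs_sub_sub_sub_le hc hd]
  calc _ ≤ |overlap a b c d - overlap a' b' c' d'| / η ^ 2 +
        1 * |(b - a) * (d - c) - (b' - a') * (d' - c')| / (η ^ 2) ^ 2 :=
        abs_div_sub_div_le (by positivity) (harea hab hcd) (harea hab' hcd') hoverlap'
    _ ≤ 2 * δ / η ^ 2 + 1 * (4 * δ) / (η ^ 2) ^ 2 := by gcongr
    _ = (2 / η ^ 2 + 4 / η ^ 4) * δ := by ring

theorem abs_contrastPairing_sub_le {η δ a b c d e f a' b' c' d' e' f' : ℝ} (hη : 0 < η)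
    (h₁ : IsSeparatedTriple η a b c) (h₂ : IsSeparatedTriple η d e f)
    (h₁' : IsSeparatedTriple η a' b' c') (h₂' : IsSeparatedTriple η d' e' f')
    (ha : |a - a'| ≤ δ) (hb : |b - b'| ≤ δ) (hc : |c - c'| ≤ δ)
    (hd : |d - d'| ≤ δ) (he : |e - e'| ≤ δ) (hf : |f - f'| ≤ δ) :
    |contrastPairing a b c d e f - contrastPairing a' b' c' d' e' f'| ≤
      4 * (2 / η ^ 2 + 4 / η ^ 4) * δ := by
  obtain ⟨-, hab, hbc, -⟩ := h₁
  obtain ⟨hd₀, hde, hef, hf₁⟩ := h₂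
  obtain ⟨ha₀', hab', hbc', hc₁'⟩ := h₁'
  obtain ⟨-, hde', hef', -⟩ := h₂'
  have h₁₁ := abs_normalizedOverlap_sub_le hη hab hde hab' hde' (by linarith) (by linarith)
    ha hb hd he
  have h₁₂ := abs_normalizedOverlap_sub_le hη hab hef hab' hef' (by linarith) (by linarith)
    ha hb he hf
  have h₂₁ := abs_normalizedOverlap_sub_le hη hbc hde hbc' hde' (by linarith) (by linarith)
    hb hc hd he
  have h₂₂ := abs_normalizedOverlap_sub_le hη hbc hef hbc' hef' (by linarith) (by linarith)
    hb hc he hf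
  rw [abs_le] at *
  unfold contrastPairing
  constructor <;> linarith

theorem stmt_17_general (ε : ℝ) (hε₀ : 0 < ε) :
    ∃ K : ℝ, 0 < K ∧ ∃ N₀ : ℕ, ∀ n : ℕ, N₀ ≤ n →
      ∀ t₁ t₂ t₃ m₁ m₂ m₃ : ℝ,
        0 ≤ t₁ → t₃ ≤ 1 → ε ≤ t₂ - t₁ → ε ≤ t₃ - t₂ →
        0 ≤ m₁ → m₃ ≤ 1 → ε ≤ m₂ - m₁ → ε ≤ m₃ - m₂ →
        |(∑ j, uVec n t₁ t₂ t₃ j * uVec n m₁ m₂ m₃ j) -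
            kappa t₁ t₂ t₃ m₁ m₂ m₃| ≤ K / n := by
  refine ⟨4 * (2 / (ε / 2) ^ 2 + 4 / (ε / 2) ^ 4), by positivity, ⌈2 / ε⌉₊,
    fun n hn t₁ t₂ t₃ m₁ m₂ m₃ ht₁ ht₃ ht₁₂ ht₂₃ hm₁ hm₃ hm₁₂ hm₂₃ => ?_⟩
  have hn' : 2 / ε ≤ n := Nat.ceil_le.1 hn
  have hn₀ : 0 < n := by exact_mod_cast (by positivity : (0 : ℝ) < 2 / ε).trans_le hn'
  have hmesh : 1 / (n : ℝ) ≤ ε / 2 := by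
    rw [div_le_iff₀ hε₀] at hn'
    rw [div_le_div_iff₀ (by exact_mod_cast hn₀) two_pos]
    linarith
  have ht : IsSeparatedTriple ε t₁ t₂ t₃ := ⟨ht₁, ht₁₂, ht₂₃, ht₃⟩
  have hm : IsSeparatedTriple ε m₁ m₂ m₃ := ⟨hm₁, hm₁₂, hm₂₃, hm₃⟩
  have hs := (ht.gridRound hn₀ hε₀.le).mono (by linarith : ε / 2 ≤ ε - 1 / n)
  have hr := (hm.gridRound hn₀ hε₀.le).mono (by linarith : ε / 2 ≤ ε - 1 / n)
  rw [sum_uVec_mul_uVec_eq_kappa_gridRound hn₀, kappa_eq_contrastPairing (hs.mono (by positivity)),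
    kappa_eq_contrastPairing (ht.mono hε₀.le), div_eq_mul_one_div]
  exact abs_contrastPairing_sub_le (half_pos hε₀) hs hr (ht.mono (half_le_self hε₀.le))
    (hm.mono (half_le_self hε₀.le))
    (abs_gridRound_sub_le hn₀ ht₁) (abs_gridRound_sub_le hn₀ (by linarith))
    (abs_gridRound_sub_le hn₀ (by linarith)) (abs_gridRound_sub_le hn₀ hm₁)
    (abs_gridRound_sub_le hn₀ (by linarith)) (abs_gridRound_sub_le hn₀ (by linarith))

/-- Uniform `O(1/n)` approximation of the inner products of the
discrete contrast vectors by the inner products `κ` of the limiting step functions,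
over all `ε`-separated triples. -/
theorem stmt_17 (ε : ℝ) (hε₀ : 0 < ε) (hε₁ : ε ≤ 1 / 3) :
    ∃ K : ℝ, 0 < K ∧ ∃ N₀ : ℕ, ∀ n : ℕ, N₀ ≤ n →
      ∀ t₁ t₂ t₃ m₁ m₂ m₃ : ℝ,
        0 ≤ t₁ → t₃ ≤ 1 → ε ≤ t₂ - t₁ → ε ≤ t₃ - t₂ →
        0 ≤ m₁ → m₃ ≤ 1 → ε ≤ m₂ - m₁ → ε ≤ m₃ - m₂ →
        |(∑ j, uVec n t₁ t₂ t₃ j * uVec n m₁ m₂ m₃ j) -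
            kappa t₁ t₂ t₃ m₁ m₂ m₃| ≤ K / n :=
  stmt_17_general ε hε₀
end
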